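/- arXiv:1502.03840 — 10 statements merged into one kernel-verified Lean document; each statement's English description precedes it below -/
import Mathlib

section
/- Under the optimal-price first-order condition, κ(v) tends to +∞ as v tends to +∞ (part of the market-share convergence lemma). -/
/-!
Fix a level `K > 0` and look at prices `v` with `κ v < K`. There the market share
`η` is bounded away from `1`, uniformly in `v`, so the bracket in the first-order
condition, a convex combination of `β₁ (1 - η)` and `1` with weight `P₀`, is at least
some `d > 0`. The condition then bounds the exponent `α₂ r v` by `1 / d`, whence
`κ v = v e^{-α₂ r v} ≥ e^{-1/d} v`, which exceeds `K` for large `v`.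
-/

open Filter Real

lemma tendsto_atTop_of_forall_lt_imp_mul_le {f : ℝ → ℝ}
    (h : ∀ K > 0, ∃ c > 0, ∀ᶠ v in atTop, f v < K → c * v ≤ f v) :
    Tendsto f atTop atTop := by
  refine tendsto_atTop.2 fun b => ?_
  obtain ⟨c, hc, hf⟩ := h (max b 1) (by positivity)
  filter_upwards [hf, eventually_ge_atTop (max b 1 / c)] with v hfv hv
  by_contra! hlt
  have hK : max b 1 ≤ c * v := (div_le_iff₀' hc).1 hv
  linarith [hfv (hlt.trans_le (le_max_left b 1)), le_max_left b 1]

lemma min_le_mul_one_sub_add (a : ℝ) {p : ℝ} (hp₀ : 0 ≤ p) (hp₁ : p ≤ 1) :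
    min a 1 ≤ a * (1 - p) + p := by
  nlinarith [min_le_left a 1, min_le_right a 1]

lemma le_one_div_of_mul_eq_one {x B d : ℝ} (hd : 0 < d) (hdB : d ≤ B) (h : x * B = 1) :
    x ≤ 1 / d := by
  rw [eq_one_div_of_mul_eq_one_left h]
  exact one_div_le_one_div_of_le hd hdB

lemma div_rpow_add_le_one_sub_rpow_div {q k K β C : ℝ} (hq : 0 ≤ q) (hk : 0 ≤ k)
    (hkK : k ≤ K) (hβ : 0 ≤ β) (hC : 0 < C) :
    C / ((q + K) ^ β + C) ≤ 1 - (q + k) ^ β / ((q + k) ^ β + C) := by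
  have hqk : 0 ≤ (q + k) ^ β := rpow_nonneg (by positivity) β
  rw [one_sub_div (by positivity), add_sub_cancel_left]
  gcongr

theorem statement_0_general
    (α₂ β₁ q₀ C : ℝ) (hβ₁ : 0 < β₁) (hq₀ : 0 < q₀) (hC : 0 < C)
    (r : ℝ → ℝ)
    (κ η P₀ : ℝ → ℝ)
    (hκ : ∀ v, 0 < v → κ v = v * Real.exp (-(α₂ * r v)))
    (hη : ∀ v, 0 < v → η v = (q₀ + κ v) ^ β₁ / ((q₀ + κ v) ^ β₁ + C))
    (hP₀ : ∀ v, 0 < v → P₀ v = q₀ / (q₀ + κ v))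
    (hfoc : ∀ v, 0 < v →
      α₂ * β₁ * r v * (1 - η v) * (1 - P₀ v) + α₂ * r v * P₀ v = 1) :
    Tendsto κ atTop atTop := by
  refine tendsto_atTop_of_forall_lt_imp_mul_le fun K hK => ?_
  set c := C / ((q₀ + K) ^ β₁ + C)
  set d := min (β₁ * c) 1
  have hd : 0 < d := lt_min (by positivity) one_pos
  refine ⟨exp (-(1 / d)), exp_pos _, ?_⟩
  filter_upwards [eventually_gt_atTop 0] with v hv hκK
  have hκ₀ : 0 ≤ κ v := by rw [hκ v hv]; positivity
  have hP₀₀ : 0 ≤ P₀ v := by rw [hP₀ v hv]; positivity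
  have hP₀₁ : P₀ v ≤ 1 := by rw [hP₀ v hv]; exact div_le_one_of_le₀ (by linarith) (by positivity)
  have hcη : c ≤ 1 - η v := by
    rw [hη v hv]; exact div_rpow_add_le_one_sub_rpow_div hq₀.le hκ₀ hκK.le hβ₁.le hC
  have hbracket : d ≤ β₁ * (1 - η v) * (1 - P₀ v) + P₀ v :=
    (min_le_min_right 1 (mul_le_mul_of_nonneg_left hcη hβ₁.le)).trans
      (min_le_mul_one_sub_add _ hP₀₀ hP₀₁)
  have hexponent : α₂ * r v ≤ 1 / d :=
    le_one_div_of_mul_eq_one hd hbracket (by linear_combination hfoc v hv)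
  rw [hκ v hv, mul_comm]
  gcongr

theorem statement_0
    (α₂ β₁ q₀ C : ℝ) (hα₂ : 0 < α₂) (hβ₁ : 0 < β₁) (hq₀ : 0 < q₀) (hC : 0 < C)
    (r : ℝ → ℝ) (hr : ∀ v, 0 < v → 0 < r v)
    (κ η P₀ : ℝ → ℝ)
    (hκ : ∀ v, 0 < v → κ v = v * Real.exp (-(α₂ * r v)))
    (hη : ∀ v, 0 < v → η v = (q₀ + κ v) ^ β₁ / ((q₀ + κ v) ^ β₁ + C))
    (hP₀ : ∀ v, 0 < v → P₀ v = q₀ / (q₀ + κ v))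
    (hfoc : ∀ v, 0 < v →
      α₂ * β₁ * r v * (1 - η v) * (1 - P₀ v) + α₂ * r v * P₀ v = 1) :
    Tendsto κ atTop atTop :=
  statement_0_general α₂ β₁ q₀ C hβ₁ hq₀ hC r κ η P₀ hκ hη hP₀ hfoc
end

section
/- Under the optimal-price first-order condition, the opt-out probability P₀(v) = q₀/(q₀ + κ(v)) tends to 0 as v tends to +∞ (part of the market-share convergence lemma). -/
/-!
The first-order condition is a sum of two non-negative terms equal to `1`, so its second term
gives `α₂ r(v) ≤ 1 / P₀(v) = (q₀ + κ(v)) / q₀`. Hence `κ(v) = v e^{-α₂ r(v)}` is at least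
`v e^{-(q₀ + κ(v)) / q₀}`: along any `v → ∞` on which `κ` stayed bounded by `M`, `κ(v)` would
exceed `v e^{-(q₀ + M) / q₀} → ∞`. So `κ → ∞` and `P₀ = q₀ / (q₀ + κ) → 0`.
-/

open Filter Real

theorem tendsto_atTop_of_mul_exp_neg_le {κ φ : ℝ → ℝ} (hφ : Monotone φ)
    (h : ∀ᶠ v in atTop, v * exp (-φ (κ v)) ≤ κ v) : Tendsto κ atTop atTop := by
  rw [tendsto_atTop]
  intro M
  filter_upwards [h, eventually_ge_atTop (M * exp (φ M)), eventually_ge_atTop 0]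
    with v hκv hvM hv
  by_contra! hlt
  have hexp : exp (-φ M) ≤ exp (-φ (κ v)) := exp_le_exp.mpr (neg_le_neg (hφ hlt.le))
  have hM : M ≤ v * exp (-φ M) := by
    rw [exp_neg, ← div_eq_mul_inv, le_div_iff₀ (exp_pos _)]
    exact hvM
  linarith [mul_le_mul_of_nonneg_left hexp hv]

theorem mul_le_div_of_foc {a β ρ q k η : ℝ} (ha : 0 ≤ a) (hβ : 0 ≤ β) (hρ : 0 ≤ ρ)
    (hq : 0 < q) (hk : 0 ≤ k) (hη : η ≤ 1)
    (hfoc : a * β * ρ * (1 - η) * (1 - q / (q + k)) + a * ρ * (q / (q + k)) = 1) :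
    a * ρ ≤ (q + k) / q := by
  have hqk : 0 < q + k := by linarith
  have hP : q / (q + k) ≤ 1 := div_le_one_of_le₀ (by linarith) hqk.le
  have hfirst : 0 ≤ a * β * ρ * (1 - η) * (1 - q / (q + k)) := by
    have : 0 ≤ 1 - η := by linarith
    have : 0 ≤ 1 - q / (q + k) := by linarith
    positivity
  have hsecond : a * ρ * (q / (q + k)) ≤ 1 := by linarith
  rw [← mul_div_assoc, div_le_one hqk] at hsecond
  exact (le_div_iff₀ hq).mpr hsecond

theorem statement_1
    (α₂ β₁ q₀ C : ℝ) (hα₂ : 0 < α₂) (hβ₁ : 0 < β₁) (hq₀ : 0 < q₀) (hC : 0 < C)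
    (r : ℝ → ℝ) (hr : ∀ v, 0 < v → 0 < r v)
    (κ η P₀ : ℝ → ℝ)
    (hκ : ∀ v, 0 < v → κ v = v * Real.exp (-(α₂ * r v)))
    (hη : ∀ v, 0 < v → η v = (q₀ + κ v) ^ β₁ / ((q₀ + κ v) ^ β₁ + C))
    (hP₀ : ∀ v, 0 < v → P₀ v = q₀ / (q₀ + κ v))
    (hfoc : ∀ v, 0 < v →
      α₂ * β₁ * r v * (1 - η v) * (1 - P₀ v) + α₂ * r v * P₀ v = 1) :
    Tendsto P₀ atTop (nhds 0) := by
  have hκ_nonneg : ∀ v, 0 < v → 0 ≤ κ v := fun v hv => by rw [hκ v hv]; positivity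
  have hη_le : ∀ v, 0 < v → η v ≤ 1 := fun v hv => by
    rw [hη v hv]
    have : 0 ≤ (q₀ + κ v) ^ β₁ := rpow_nonneg (by linarith [hκ_nonneg v hv]) _
    exact div_le_one_of_le₀ (by linarith) (by linarith)
  have hκ_top : Tendsto κ atTop atTop := by
    refine tendsto_atTop_of_mul_exp_neg_le (φ := fun k => (q₀ + k) / q₀)
      (fun _ _ h => by dsimp only; gcongr) ?_
    filter_upwards [eventually_gt_atTop 0] with v hv
    have hbound := mul_le_div_of_foc hα₂.le hβ₁.le (hr v hv).le hq₀ (hκ_nonneg v hv)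
      (hη_le v hv) (by rw [← hP₀ v hv]; exact hfoc v hv)
    calc v * exp (-((q₀ + κ v) / q₀)) ≤ v * exp (-(α₂ * r v)) := by gcongr
      _ = κ v := (hκ v hv).symm
  have hlim : Tendsto (fun v => q₀ / (q₀ + κ v)) atTop (nhds 0) :=
    tendsto_const_nhds.div_atTop (tendsto_atTop_add_const_left _ q₀ hκ_top)
  refine hlim.congr' ?_
  filter_upwards [eventually_gt_atTop 0] with v hv
  exact (hP₀ v hv).symm
end

section
/- Under the optimal-price first-order condition, the EV market share η(v) = (q₀ + κ(v))^β₁ / ((q₀ + κ(v))^β₁ + C) tends to 1 as v tends to +∞ (part of the market-share convergence lemma). -/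
/-!
Dropping the nonnegative first term of the first-order condition gives `α₂ r P₀ ≤ 1`, i.e.
`α₂ r ≤ 1 + κ / q₀`. Feeding this into `κ = v e^{-α₂ r}` yields `v / e ≤ κ e^{κ / q₀}`, so `κ` must
grow without bound, and then `η = y / (y + C)` with `y = (q₀ + κ)^β₁ → ∞` tends to `1`.
-/

open Filter Real

theorem mul_le_add_of_foc {a b r e q k : ℝ} (habr : 0 ≤ a * b * r) (he : e ≤ 1) (hq : 0 < q)
    (hk : 0 ≤ k) (hfoc : a * b * r * (1 - e) * (1 - q / (q + k)) + a * r * (q / (q + k)) = 1) :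
    a * r * q ≤ q + k := by
  have hqk : 0 < q + k := by linarith
  have hP : q / (q + k) ≤ 1 := (div_le_one hqk).mpr (by linarith)
  have hfirst : 0 ≤ a * b * r * (1 - e) * (1 - q / (q + k)) :=
    mul_nonneg (mul_nonneg habr (by linarith)) (by linarith)
  have hbound : a * r * (q / (q + k)) ≤ 1 := by linarith
  rwa [← mul_div_assoc, div_le_one hqk] at hbound

theorem div_exp_one_le_mul_exp {v s k q : ℝ} (hv : 0 < v) (hq : 0 < q) (hk : k = v * exp (-s))
    (hs : s * q ≤ q + k) : v / exp 1 ≤ k * exp (k / q) := by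
  have hs' : s ≤ 1 + k / q :=
    calc s ≤ (q + k) / q := (le_div_iff₀ hq).mpr hs
      _ = 1 + k / q := by field_simp
  calc v / exp 1 = k * exp (s - 1) := by
        rw [hk, mul_assoc, ← exp_add, show -s + (s - 1) = -1 by ring, exp_neg, div_eq_mul_inv]
    _ ≤ k * exp (k / q) := by
        gcongr
        · rw [hk]; positivity
        · linarith

theorem mul_exp_div_le_mul_exp (x : ℝ) {c : ℝ} (hc : 0 < c) :
    x * exp (x / c) ≤ c * exp (2 * x / c) := by
  have hx : x ≤ c * exp (x / c) := by
    have := add_one_le_exp (x / c)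
    rw [← div_le_iff₀' hc]
    linarith
  calc x * exp (x / c) ≤ c * exp (x / c) * exp (x / c) := by gcongr
    _ = c * exp (2 * x / c) := by rw [mul_assoc, ← exp_add]; ring_nf

theorem tendsto_atTop_of_le_mul_exp {α : Type*} {l : Filter α} {f g : α → ℝ} {c : ℝ}
    (hc : 0 < c) (hg : Tendsto g l atTop) (hfg : ∀ᶠ x in l, g x ≤ f x * exp (f x / c)) :
    Tendsto f l atTop := by
  have hexp : Tendsto (fun x => exp (2 * f x / c)) l atTop := by
    refine tendsto_atTop_mono' l ?_ (hg.atTop_div_const hc)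
    filter_upwards [hfg] with x hx
    rw [div_le_iff₀' hc]
    exact hx.trans (mul_exp_div_le_mul_exp (f x) hc)
  refine ((tendsto_exp_comp_atTop.mp hexp).atTop_mul_const (half_pos hc)).congr fun x => ?_
  field_simp

theorem tendsto_div_add_const_nhds_one {α : Type*} {l : Filter α} {y : α → ℝ}
    (hy : Tendsto y l atTop) (C : ℝ) : Tendsto (fun x => y x / (y x + C)) l (nhds 1) := by
  have hsmall : Tendsto (fun x => C / (y x + C)) l (nhds 0) := by
    simpa [div_eq_mul_inv] using
      (tendsto_atTop_add_const_right l C hy).inv_tendsto_atTop.const_mul C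
  have hone : Tendsto (fun x => 1 - C / (y x + C)) l (nhds 1) := by
    simpa using hsmall.const_sub 1
  refine hone.congr' ?_
  filter_upwards [(tendsto_atTop_add_const_right l C hy).eventually_gt_atTop 0] with x hx
  field_simp
  ring

theorem statement_2
    (α₂ β₁ q₀ C : ℝ) (hα₂ : 0 < α₂) (hβ₁ : 0 < β₁) (hq₀ : 0 < q₀) (hC : 0 < C)
    (r : ℝ → ℝ) (hr : ∀ v, 0 < v → 0 < r v)
    (κ η P₀ : ℝ → ℝ)
    (hκ : ∀ v, 0 < v → κ v = v * Real.exp (-(α₂ * r v)))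
    (hη : ∀ v, 0 < v → η v = (q₀ + κ v) ^ β₁ / ((q₀ + κ v) ^ β₁ + C))
    (hP₀ : ∀ v, 0 < v → P₀ v = q₀ / (q₀ + κ v))
    (hfoc : ∀ v, 0 < v →
      α₂ * β₁ * r v * (1 - η v) * (1 - P₀ v) + α₂ * r v * P₀ v = 1) :
    Tendsto η atTop (nhds 1) := by
  have hκ_pos : ∀ v, 0 < v → 0 < κ v := fun v hv => by rw [hκ v hv]; positivity
  have hη_le : ∀ v, 0 < v → η v ≤ 1 := fun v hv => by
    have := rpow_nonneg (by linarith [hκ_pos v hv] : 0 ≤ q₀ + κ v) β₁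
    rw [hη v hv, div_le_one (by linarith)]
    linarith
  have hκ_top : Tendsto κ atTop atTop := by
    refine tendsto_atTop_of_le_mul_exp hq₀ (tendsto_id.atTop_div_const (exp_pos 1)) ?_
    filter_upwards [eventually_gt_atTop 0] with v hv
    have hr_pos := hr v hv
    have hfoc_v := hfoc v hv
    rw [hP₀ v hv] at hfoc_v
    exact div_exp_one_le_mul_exp hv hq₀ (hκ v hv)
      (mul_le_add_of_foc (by positivity) (hη_le v hv) hq₀ (hκ_pos v hv).le hfoc_v)
  have hrpow_top : Tendsto (fun v => (q₀ + κ v) ^ β₁) atTop atTop :=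
    (tendsto_rpow_atTop hβ₁).comp (tendsto_atTop_add_const_left _ q₀ hκ_top)
  refine (tendsto_div_add_const_nhds_one hrpow_top C).congr' ?_
  filter_upwards [eventually_gt_atTop 0] with v hv
  exact (hη v hv).symm
end

section
/- For every v > 0, the denominator H(v) satisfies the identity H(v) = (β₁·η(v)·(1 − P₀(v)) − P₀(v)) + α₂·r(v)·P₀(v)·(1 − β₁·η(v)·(1 − P₀(v))), as a consequence of the optimal-price first-order condition. -/
open Filter Real

theorem statement_5_general
    (α₂ β₁ : ℝ)
    (r : ℝ → ℝ)
    (η P₀ : ℝ → ℝ)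
    (hfoc : ∀ v, 0 < v →
      α₂ * β₁ * r v * (1 - η v) * (1 - P₀ v) + α₂ * r v * P₀ v = 1)
    (H : ℝ → ℝ)
    (hH : ∀ v, 0 < v → H v =
      α₂ * β₁ ^ 2 * r v * η v * (1 - η v) * (1 - P₀ v) ^ 2
      - α₂ * β₁ * r v * (1 - η v) * P₀ v * (1 - P₀ v)
      + α₂ * r v * P₀ v * (1 - P₀ v)) :
    ∀ v, 0 < v → H v =
      (β₁ * η v * (1 - P₀ v) - P₀ v) + α₂ * r v * P₀ v * (1 - β₁ * η v * (1 - P₀ v)) := by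
  intro v hv
  rw [hH v hv]
  linear_combination (β₁ * η v * (1 - P₀ v) - P₀ v) * hfoc v hv

theorem statement_5
    (α₂ β₁ q₀ C : ℝ) (hα₂ : 0 < α₂) (hβ₁ : 0 < β₁) (hq₀ : 0 < q₀) (hC : 0 < C)
    (r : ℝ → ℝ) (hr : ∀ v, 0 < v → 0 < r v)
    (κ η P₀ : ℝ → ℝ)
    (hκ : ∀ v, 0 < v → κ v = v * Real.exp (-(α₂ * r v)))
    (hη : ∀ v, 0 < v → η v = (q₀ + κ v) ^ β₁ / ((q₀ + κ v) ^ β₁ + C))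
    (hP₀ : ∀ v, 0 < v → P₀ v = q₀ / (q₀ + κ v))
    (hfoc : ∀ v, 0 < v →
      α₂ * β₁ * r v * (1 - η v) * (1 - P₀ v) + α₂ * r v * P₀ v = 1)
    (H : ℝ → ℝ)
    (hH : ∀ v, 0 < v → H v =
      α₂ * β₁ ^ 2 * r v * η v * (1 - η v) * (1 - P₀ v) ^ 2
      - α₂ * β₁ * r v * (1 - η v) * P₀ v * (1 - P₀ v)
      + α₂ * r v * P₀ v * (1 - P₀ v)) :
    ∀ v, 0 < v → H v =
      (β₁ * η v * (1 - P₀ v) - P₀ v) + α₂ * r v * P₀ v * (1 - β₁ * η v * (1 - P₀ v)) :=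
  statement_5_general α₂ β₁ r η P₀ hfoc H hH
end

section
/- Under the optimal-price first-order condition, the denominator H(v) is bounded below away from zero for large v: there exist c > 0 and v̄ > 0 such that H(v) ≥ c for all v ≥ v̄. -/
/-!
The first-order condition writes `1 = D + B` with `D, B ≥ 0`, and `H = D X + B Y` where
`X = β₁ η (1 - P₀) - P₀` and `Y = 1 - P₀`; hence `H ≥ min X Y`. Since `B = α₂ r P₀ ≤ 1`,
`α₂ r` is at most `1 + κ / q₀`, so `κ = v exp (-α₂ r)` cannot stay bounded as `v → ∞`.
Then `P₀ → 0` and `η → 1`, so `X → β₁` and `Y → 1`, and eventually `H ≥ min β₁ 1 / 2`.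
-/

open Filter Real Set Topology

lemma div_add_mem_Ioo {x y : ℝ} (hx : 0 < x) (hy : 0 < y) : x / (x + y) ∈ Ioo 0 1 :=
  ⟨by positivity, (div_lt_one (by positivity)).2 (lt_add_of_pos_right x hy)⟩

lemma tendsto_div_add_const_atTop (C : ℝ) :
    Tendsto (fun x : ℝ => x / (x + C)) atTop (𝓝 1) := by
  have h : Tendsto (fun x : ℝ => 1 - C / (x + C)) atTop (𝓝 (1 - 0)) :=
    tendsto_const_nhds.sub
      (tendsto_const_nhds.div_atTop (tendsto_atTop_add_const_right _ C tendsto_id))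
  rw [sub_zero] at h
  refine h.congr' ?_
  filter_upwards [eventually_gt_atTop (-C)] with x hx
  field_simp [(by linarith : x + C ≠ 0)]
  ring

lemma tendsto_atTop_of_eq_mul_exp_neg {f g : ℝ → ℝ} {a b : ℝ} (hb : 0 ≤ b)
    (hf : ∀ᶠ v in atTop, f v = v * exp (-g v)) (hg : ∀ᶠ v in atTop, g v ≤ a + b * f v) :
    Tendsto f atTop atTop := by
  refine tendsto_atTop.2 fun M => ?_
  filter_upwards [hf, hg, eventually_ge_atTop 0, eventually_ge_atTop (M * exp (a + b * M))]
    with v hfv hgv hv0 hvM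
  by_contra! hlt
  have hexp : exp (-(a + b * M)) ≤ exp (-g v) := by
    gcongr
    nlinarith
  have : M ≤ f v := calc
    M = M * exp (a + b * M) * exp (-(a + b * M)) := by rw [mul_assoc, ← exp_add]; simp
    _ ≤ v * exp (-g v) := mul_le_mul hvM hexp (exp_nonneg _) hv0
    _ = f v := hfv.symm
  linarith

lemma le_one_add_inv_mul_of_mul_div_le_one {x q k : ℝ} (hq : 0 < q) (hk : 0 ≤ k)
    (h : x * (q / (q + k)) ≤ 1) : x ≤ 1 + q⁻¹ * k := by
  rw [mul_div_assoc', div_le_one (by positivity)] at h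
  rw [← sub_le_iff_le_add', inv_mul_eq_div, le_div_iff₀ hq]
  linarith

lemma eventually_const_le_mul_add_mul {α : Type*} {l : Filter α} {d b X Y : α → ℝ} {x y c : ℝ}
    (hd : ∀ᶠ v in l, 0 ≤ d v) (hb : ∀ᶠ v in l, 0 ≤ b v) (hdb : ∀ᶠ v in l, d v + b v = 1)
    (hX : Tendsto X l (𝓝 x)) (hY : Tendsto Y l (𝓝 y)) (hc : c < min x y) :
    ∀ᶠ v in l, c ≤ d v * X v + b v * Y v := by
  filter_upwards [hd, hb, hdb, (hX.min hY).eventually_const_le hc] with v hdv hbv hdbv hmin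
  exact hmin.trans (Convex.min_le_combo _ _ hdv hbv hdbv)

theorem statement_6
    (α₂ β₁ q₀ C : ℝ) (hα₂ : 0 < α₂) (hβ₁ : 0 < β₁) (hq₀ : 0 < q₀) (hC : 0 < C)
    (r : ℝ → ℝ) (hr : ∀ v, 0 < v → 0 < r v)
    (κ η P₀ : ℝ → ℝ)
    (hκ : ∀ v, 0 < v → κ v = v * Real.exp (-(α₂ * r v)))
    (hη : ∀ v, 0 < v → η v = (q₀ + κ v) ^ β₁ / ((q₀ + κ v) ^ β₁ + C))
    (hP₀ : ∀ v, 0 < v → P₀ v = q₀ / (q₀ + κ v))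
    (hfoc : ∀ v, 0 < v →
      α₂ * β₁ * r v * (1 - η v) * (1 - P₀ v) + α₂ * r v * P₀ v = 1)
    (H : ℝ → ℝ)
    (hH : ∀ v, 0 < v → H v =
      α₂ * β₁ ^ 2 * r v * η v * (1 - η v) * (1 - P₀ v) ^ 2
      - α₂ * β₁ * r v * (1 - η v) * P₀ v * (1 - P₀ v)
      + α₂ * r v * P₀ v * (1 - P₀ v)) :
    ∃ c > 0, ∃ vbar > 0, ∀ v, vbar ≤ v → c ≤ H v := by
  have hκ_pos : ∀ v, 0 < v → 0 < κ v := fun v hv => hκ v hv ▸ mul_pos hv (exp_pos _)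
  have hP₀_mem : ∀ v, 0 < v → P₀ v ∈ Ioo 0 1 := fun v hv =>
    hP₀ v hv ▸ div_add_mem_Ioo hq₀ (hκ_pos v hv)
  have hη_lt : ∀ v, 0 < v → η v < 1 := fun v hv =>
    hη v hv ▸ (div_add_mem_Ioo (rpow_pos_of_pos (by linarith [hκ_pos v hv]) β₁) hC).2
  have hD : ∀ v, 0 < v → 0 ≤ α₂ * β₁ * r v * (1 - η v) * (1 - P₀ v) := fun v hv =>
    mul_nonneg (mul_nonneg (by have := hr v hv; positivity) (sub_nonneg.2 (hη_lt v hv).le))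
      (sub_nonneg.2 (hP₀_mem v hv).2.le)
  have hB : ∀ v, 0 < v → 0 ≤ α₂ * r v * P₀ v := fun v hv =>
    mul_nonneg (mul_nonneg hα₂.le (hr v hv).le) (hP₀_mem v hv).1.le
  have hpos := eventually_gt_atTop (0 : ℝ)
  have hκ_top : Tendsto κ atTop atTop := by
    refine tendsto_atTop_of_eq_mul_exp_neg (inv_nonneg.2 hq₀.le) (a := 1) (hpos.mono hκ) ?_
    filter_upwards [hpos] with v hv
    refine le_one_add_inv_mul_of_mul_div_le_one hq₀ (hκ_pos v hv).le ?_
    linarith [hP₀ v hv ▸ hfoc v hv, hP₀ v hv ▸ hD v hv]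
  have hq₀κ_top := tendsto_atTop_add_const_left _ q₀ hκ_top
  have hP₀_lim : Tendsto P₀ atTop (𝓝 0) :=
    (tendsto_const_nhds.div_atTop hq₀κ_top).congr' (hpos.mono fun v hv => (hP₀ v hv).symm)
  have hη_lim : Tendsto η atTop (𝓝 1) :=
    ((tendsto_div_add_const_atTop C).comp ((tendsto_rpow_atTop hβ₁).comp hq₀κ_top)).congr'
      (hpos.mono fun v hv => (hη v hv).symm)
  have h1P₀_lim := (tendsto_const_nhds (x := (1 : ℝ))).sub hP₀_lim
  have hH_ge : ∀ᶠ v in atTop, min β₁ 1 / 2 ≤ H v := by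
    filter_upwards [hpos, eventually_const_le_mul_add_mul (hpos.mono hD) (hpos.mono hB)
      (hpos.mono hfoc) ((((tendsto_const_nhds (x := β₁)).mul hη_lim).mul h1P₀_lim).sub hP₀_lim)
      h1P₀_lim (by simpa using half_lt_self (lt_min hβ₁ one_pos))] with v hv hle
    rw [hH v hv]
    linarith
  obtain ⟨a, ha⟩ := eventually_atTop.1 hH_ge
  exact ⟨_, by positivity, max a 1, by positivity, fun v hv => ha v (le_of_max_le_left hv)⟩
end

section
/- Under the optimal-price first-order condition, h(v) tends to 0 as v tends to +∞. -/
/-!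
The first-order condition reads `α₂ r D = 1` with `D = β₁ (1 - η)(1 - P₀) + P₀`, and `H = α₂ r G`
(`D` and `G` are `focBracket` and `socBracket` below), so `h = D² / G`. Since
`D ≥ P₀ = q₀ / (q₀ + κ)`, the condition gives `α₂ r ≤ 1 + κ / q₀`; hence `v = κ e^{α₂ r}` is
bounded whenever `κ` is, so `κ → ∞`. Then `P₀ → 0` and `η → 1`, and in that regime
`G ≳ β₁ (1 - η) + P₀ ≥ D`, so `h = D² / G ≲ β₁ (1 - η) + P₀ → 0`.
-/

open Filter Real Topology

def focBracket (β η p : ℝ) : ℝ := β * (1 - η) * (1 - p) + p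

def socBracket (β η p : ℝ) : ℝ :=
  β ^ 2 * η * (1 - η) * (1 - p) ^ 2 - β * (1 - η) * p * (1 - p) + p * (1 - p)

lemma le_focBracket {β η p : ℝ} (hβ : 0 ≤ β) (hη : η ≤ 1) (hp : p ≤ 1) :
    p ≤ focBracket β η p := by
  unfold focBracket
  have : 0 ≤ β * (1 - η) * (1 - p) := by
    apply mul_nonneg (mul_nonneg hβ _) <;> linarith
  linarith

lemma focBracket_le {β η p : ℝ} (hβ : 0 ≤ β) (hη : η ≤ 1) (hp : 0 ≤ p) :
    focBracket β η p ≤ β * (1 - η) + p := by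
  unfold focBracket
  nlinarith [mul_nonneg (mul_nonneg hβ (sub_nonneg.2 hη)) hp]

lemma socBracket_ge {β η p : ℝ} (hβ : 0 < β) (hp : 0 ≤ p) (hp2 : p ≤ 1 / 2)
    (hη2 : 1 / 2 ≤ η) (hη1 : η ≤ 1) (hβη : β * (1 - η) ≤ 1 / 4) :
    min β 1 / 8 * (β * (1 - η) + p) ≤ socBracket β η p := by
  unfold socBracket
  set c := min β 1
  have hcβ : c ≤ β := min_le_left _ _
  have hc1 : c ≤ 1 := min_le_right _ _
  have ha : 0 ≤ 1 - η := by linarith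
  have hηp : 1 / 8 ≤ η * (1 - p) ^ 2 := by nlinarith
  have hfirst : β ^ 2 * (1 - η) / 8 ≤ β ^ 2 * η * (1 - η) * (1 - p) ^ 2 := by
    nlinarith [mul_le_mul_of_nonneg_left hηp (by positivity : (0 : ℝ) ≤ β ^ 2 * (1 - η))]
  have hrest : 3 * p / 8 ≤ p * (1 - p) - β * (1 - η) * p * (1 - p) := by
    have : 3 / 8 ≤ (1 - p) * (1 - β * (1 - η)) := by nlinarith
    nlinarith [mul_le_mul_of_nonneg_left this hp]
  nlinarith [mul_nonneg (mul_nonneg (sub_nonneg.2 hcβ) hβ.le) ha,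
    mul_nonneg (sub_nonneg.2 hc1) hp]

lemma sq_div_le_div_of_le {D S G k : ℝ} (hD : 0 ≤ D) (hDS : D ≤ S) (hk : 0 < k)
    (hS : 0 < S) (hG : k * S ≤ G) : D ^ 2 / G ≤ S / k := by
  have hG0 : 0 < G := lt_of_lt_of_le (by positivity) hG
  rw [div_le_div_iff₀ hG0 hk]
  nlinarith [pow_le_pow_left₀ hD hDS 2, mul_le_mul_of_nonneg_left hG hS.le]

lemma div_mul_eq_sq_div_of_mul_eq_one {t D G : ℝ} (h : t * D = 1) :
    D / (t * G) = D ^ 2 / G := by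
  rw [eq_inv_of_mul_eq_one_left h, sq, ← div_div, div_inv_eq_mul, mul_div_assoc]

lemma sq_div_socBracket_nonneg_and_le {β η p : ℝ} (hβ : 0 < β) (hp : 0 < p) (hp2 : p ≤ 1 / 2)
    (hη2 : 1 / 2 ≤ η) (hη1 : η < 1) (hβη : β * (1 - η) ≤ 1 / 4) :
    0 ≤ focBracket β η p ^ 2 / socBracket β η p ∧
      focBracket β η p ^ 2 / socBracket β η p ≤ 8 / min β 1 * (β * (1 - η) + p) := by
  have hk : 0 < min β 1 / 8 := by positivity
  have hS : 0 < β * (1 - η) + p := by nlinarith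
  have hG := socBracket_ge hβ hp.le hp2 hη2 hη1.le hβη
  refine ⟨div_nonneg (sq_nonneg _) (le_trans (by positivity) hG), ?_⟩
  calc focBracket β η p ^ 2 / socBracket β η p
      ≤ (β * (1 - η) + p) / (min β 1 / 8) :=
        sq_div_le_div_of_le (le_trans hp.le (le_focBracket hβ.le hη1.le (by linarith)))
          (focBracket_le hβ.le hη1.le hp.le) hk hS hG
    _ = 8 / min β 1 * (β * (1 - η) + p) := by ring

lemma tendsto_sq_div_socBracket {α : Type*} {l : Filter α} {β : ℝ} {η p : α → ℝ}
    (hβ : 0 < β) (hp : ∀ᶠ x in l, 0 < p x) (hη : ∀ᶠ x in l, η x < 1)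
    (hp_lim : Tendsto p l (𝓝 0)) (hη_lim : Tendsto η l (𝓝 1)) :
    Tendsto (fun x => focBracket β (η x) (p x) ^ 2 / socBracket β (η x) (p x)) l (𝓝 0) := by
  have hgap_lim : Tendsto (fun x => β * (1 - η x)) l (𝓝 0) := by
    simpa using ((tendsto_const_nhds (x := (1 : ℝ))).sub hη_lim).const_mul β
  have hbound_lim : Tendsto (fun x => 8 / min β 1 * (β * (1 - η x) + p x)) l (𝓝 0) := by
    simpa using (hgap_lim.add hp_lim).const_mul (8 / min β 1)
  have hmem : ∀ᶠ x in l, 0 ≤ focBracket β (η x) (p x) ^ 2 / socBracket β (η x) (p x) ∧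
      focBracket β (η x) (p x) ^ 2 / socBracket β (η x) (p x) ≤
        8 / min β 1 * (β * (1 - η x) + p x) := by
    filter_upwards [hp, hη, hp_lim.eventually_le_const (by norm_num : (0 : ℝ) < 1 / 2),
      hη_lim.eventually_const_le (by norm_num : (1 / 2 : ℝ) < 1),
      hgap_lim.eventually_le_const (by norm_num : (0 : ℝ) < 1 / 4)] with x hpx hηx hp2 hη2 hgap
    exact sq_div_socBracket_nonneg_and_le hβ hpx hp2 hη2 hηx hgap
  exact squeeze_zero' (hmem.mono fun _ => And.left) (hmem.mono fun _ => And.right) hbound_lim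

lemma le_one_add_inv_mul_of_mul_focBracket_eq_one {t β η q κ : ℝ} (ht : 0 ≤ t) (hβ : 0 ≤ β)
    (hη : η ≤ 1) (hq : 0 < q) (hκ : 0 ≤ κ) (h : t * focBracket β η (q / (q + κ)) = 1) :
    t ≤ 1 + q⁻¹ * κ := by
  have hqκ : 0 < q + κ := by linarith
  have hp_le : q / (q + κ) ≤ 1 := div_le_one_of_le₀ (by linarith) hqκ.le
  have hp : t * (q / (q + κ)) ≤ 1 :=
    h ▸ mul_le_mul_of_nonneg_left (le_focBracket hβ hη hp_le) ht
  rw [← mul_div_assoc, div_le_one hqκ] at hp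
  calc t = t * q * q⁻¹ := by field_simp
    _ ≤ (q + κ) * q⁻¹ := by gcongr
    _ = 1 + q⁻¹ * κ := by field_simp

lemma tendsto_atTop_of_eq_mul_exp_neg_s7 {κ s : ℝ → ℝ} {a b : ℝ} (hb : 0 ≤ b)
    (hκ : ∀ v, 0 < v → κ v = v * exp (-s v)) (hs : ∀ v, 0 < v → s v ≤ a + b * κ v) :
    Tendsto κ atTop atTop := by
  rw [tendsto_atTop]
  intro M
  set M' := max M 0
  filter_upwards [eventually_gt_atTop (max 0 (M' * exp (a + b * M')))] with v hv
  have hv0 : 0 < v := lt_of_le_of_lt (le_max_left _ _) hv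
  by_contra! hκM
  have hκM' : κ v ≤ M' := hκM.le.trans (le_max_left _ _)
  have hv_eq : v = κ v * exp (s v) := by
    rw [hκ v hv0, mul_assoc, ← exp_add, neg_add_cancel, exp_zero, mul_one]
  have : v ≤ M' * exp (a + b * M') := by
    rw [hv_eq]
    exact mul_le_mul hκM' (exp_le_exp.2 ((hs v hv0).trans (by gcongr))) (exp_pos _).le
      (le_max_right _ _)
  linarith [le_max_right (0 : ℝ) (M' * exp (a + b * M'))]

lemma tendsto_div_add_const_of_tendsto_atTop {α : Type*} {l : Filter α} {f : α → ℝ}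
    (hf : Tendsto f l atTop) (C : ℝ) : Tendsto (fun x => f x / (f x + C)) l (𝓝 1) := by
  have hlim : Tendsto (fun x => 1 - C / (f x + C)) l (𝓝 (1 - 0)) :=
    tendsto_const_nhds.sub (tendsto_const_nhds.div_atTop (tendsto_atTop_add_const_right _ C hf))
  rw [sub_zero] at hlim
  refine hlim.congr' ?_
  filter_upwards [hf.eventually_gt_atTop (-C)] with x hx
  have : f x + C ≠ 0 := by linarith
  field_simp
  ring

theorem statement_7
    (α₂ β₁ q₀ C : ℝ) (hα₂ : 0 < α₂) (hβ₁ : 0 < β₁) (hq₀ : 0 < q₀) (hC : 0 < C)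
    (r : ℝ → ℝ) (hr : ∀ v, 0 < v → 0 < r v)
    (κ η P₀ : ℝ → ℝ)
    (hκ : ∀ v, 0 < v → κ v = v * Real.exp (-(α₂ * r v)))
    (hη : ∀ v, 0 < v → η v = (q₀ + κ v) ^ β₁ / ((q₀ + κ v) ^ β₁ + C))
    (hP₀ : ∀ v, 0 < v → P₀ v = q₀ / (q₀ + κ v))
    (hfoc : ∀ v, 0 < v →
      α₂ * β₁ * r v * (1 - η v) * (1 - P₀ v) + α₂ * r v * P₀ v = 1)
    (H : ℝ → ℝ)
    (hH : ∀ v, 0 < v → H v =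
      α₂ * β₁ ^ 2 * r v * η v * (1 - η v) * (1 - P₀ v) ^ 2
      - α₂ * β₁ * r v * (1 - η v) * P₀ v * (1 - P₀ v)
      + α₂ * r v * P₀ v * (1 - P₀ v))
    (h : ℝ → ℝ)
    (hh : ∀ v, 0 < v → h v = (β₁ * (1 - η v) * (1 - P₀ v) + P₀ v) / H v) :
    Tendsto h atTop (nhds 0) := by
  have hκ_pos : ∀ v, 0 < v → 0 < κ v := fun v hv => by rw [hκ v hv]; positivity
  have hP_pos : ∀ v, 0 < v → 0 < P₀ v := fun v hv => by
    rw [hP₀ v hv]; have := hκ_pos v hv; positivity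
  have hη_lt : ∀ v, 0 < v → η v < 1 := fun v hv => by
    rw [hη v hv, div_lt_one (by have := hκ_pos v hv; positivity)]; linarith
  have hfoc' : ∀ v, 0 < v → α₂ * r v * focBracket β₁ (η v) (P₀ v) = 1 := fun v hv => by
    unfold focBracket; linear_combination hfoc v hv
  have hh_eq : ∀ v, 0 < v →
      h v = focBracket β₁ (η v) (P₀ v) ^ 2 / socBracket β₁ (η v) (P₀ v) := fun v hv => by
    rw [hh v hv, hH v hv, ← div_mul_eq_sq_div_of_mul_eq_one (hfoc' v hv)]
    unfold focBracket socBracket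
    ring_nf
  have hrate : ∀ v, 0 < v → α₂ * r v ≤ 1 + q₀⁻¹ * κ v := fun v hv =>
    le_one_add_inv_mul_of_mul_focBracket_eq_one (mul_pos hα₂ (hr v hv)).le hβ₁.le
      (hη_lt v hv).le hq₀ (hκ_pos v hv).le (hP₀ v hv ▸ hfoc' v hv)
  have hq_top : Tendsto (fun v => q₀ + κ v) atTop atTop :=
    tendsto_atTop_add_const_left _ q₀
      (tendsto_atTop_of_eq_mul_exp_neg_s7 (inv_nonneg.2 hq₀.le) hκ hrate)
  have hP_lim : Tendsto P₀ atTop (𝓝 0) :=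
    (tendsto_const_nhds.div_atTop hq_top).congr'
      (eventually_gt_atTop 0 |>.mono fun v hv => (hP₀ v hv).symm)
  have hη_lim : Tendsto η atTop (𝓝 1) :=
    (tendsto_div_add_const_of_tendsto_atTop ((tendsto_rpow_atTop hβ₁).comp hq_top) C).congr'
      (eventually_gt_atTop 0 |>.mono fun v hv => (hη v hv).symm)
  refine (tendsto_sq_div_socBracket hβ₁ (eventually_gt_atTop 0 |>.mono hP_pos)
    (eventually_gt_atTop 0 |>.mono hη_lt) hP_lim hη_lim).congr' ?_
  filter_upwards [eventually_gt_atTop 0] with v hv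
  exact (hh_eq v hv).symm
end

section
/- Assume in addition that r is differentiable on (0, +∞). Then v·r′(v) tends to 1/α₂ as v tends to +∞. -/
/-!
With `x = κ(v) = v e^{-α₂ r(v)}`, the first-order condition says exactly that
`α₂ r(v) = G(κ(v))` for the explicit function `G = OptimalPrice.scaledPrice`. As `G(x) ≤ 1 + x/q₀`,
`log v = log κ + α₂ r ≤ (1 + 1/q₀) κ`, so `κ(v) → ∞`. Differentiating `α₂ r = G ∘ κ`, where
`κ' = (κ / v) (1 - α₂ v r')`, gives `y = s (1 - y)` for `y = α₂ v r'(v)` and `s = κ G'(κ)`,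
so `y = s / (1 + s)`. Finally `x G'(x) → ∞`: with `G' = derivNum / den²`, eventually
`den² ≤ (4C / ((q₀ + x)^β₁ + C) + 4q₀ / x) · x · derivNum`.
-/

open Filter Real Topology

lemma tendsto_one_of_eq_mul_one_sub {α : Type*} {l : Filter α} {s y : α → ℝ}
    (hs : Tendsto s l atTop) (hy : ∀ᶠ a in l, y a = s a * (1 - y a)) :
    Tendsto y l (𝓝 1) := by
  have hinv : Tendsto (fun a => (1 + s a)⁻¹) l (𝓝 0) :=
    (tendsto_atTop_add_const_left _ 1 hs).inv_tendsto_atTop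
  have hy' : ∀ᶠ a in l, 1 - (1 + s a)⁻¹ = y a := by
    filter_upwards [hy, hs.eventually_ge_atTop 0] with a ha hsa
    have : 1 + s a ≠ 0 := by linarith
    field_simp
    linear_combination -ha
  simpa using (tendsto_const_nhds.sub hinv).congr' hy'

lemma tendsto_mul_exp_neg_atTop {g : ℝ → ℝ} {c d : ℝ} (hd : 0 ≤ d)
    (hg : ∀ᶠ v in atTop, g v ≤ c + d * (v * exp (-g v))) :
    Tendsto (fun v => v * exp (-g v)) atTop atTop := by
  have hlog : Tendsto (fun v => (log v + (1 - c)) / (1 + d)) atTop atTop :=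
    (tendsto_atTop_add_const_right _ _ tendsto_log_atTop).atTop_div_const (by linarith)
  refine tendsto_atTop_mono' _ ?_ hlog
  filter_upwards [hg, eventually_gt_atTop 0] with v hgv hv
  have hκ : 0 < v * exp (-g v) := by positivity
  have hlogκ : log (v * exp (-g v)) = log v - g v := by
    rw [log_mul hv.ne' (exp_pos _).ne', log_exp]; ring
  have := log_le_sub_one_of_pos hκ
  rw [div_le_iff₀ (by linarith)]
  linarith

lemma mul_deriv_eq_of_eq_comp {a v G' : ℝ} {r G : ℝ → ℝ} (hr : DifferentiableAt ℝ r v)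
    (hG : HasDerivAt G G' (v * exp (-(a * r v))))
    (heq : ∀ᶠ w in 𝓝 v, a * r w = G (w * exp (-(a * r w)))) :
    a * v * deriv r v = v * exp (-(a * r v)) * G' * (1 - a * v * deriv r v) := by
  have hκ : HasDerivAt (fun w => w * exp (-(a * r w)))
      (1 * exp (-(a * r v)) + v * (exp (-(a * r v)) * -(a * deriv r v))) v :=
    (hasDerivAt_id' v).fun_mul (hr.hasDerivAt.const_mul a).neg.exp
  have hcomp := (hG.comp v hκ).congr_of_eventuallyEq heq
  have hderiv := (hr.hasDerivAt.const_mul a).unique hcomp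
  linear_combination v * hderiv

noncomputable section

namespace OptimalPrice

variable (q₀ β₁ C : ℝ)

def den (x : ℝ) : ℝ := β₁ * C * x + q₀ * ((q₀ + x) ^ β₁ + C)

def scaledPrice (x : ℝ) : ℝ := (q₀ + x) * ((q₀ + x) ^ β₁ + C) / den q₀ β₁ C x

def derivNum (x : ℝ) : ℝ :=
  q₀ * ((q₀ + x) ^ β₁ + C) ^ 2 - β₁ * C * q₀ * ((q₀ + x) ^ β₁ + C)
    + β₁ ^ 2 * C * (q₀ + x) ^ β₁ * x

variable {q₀ β₁ C}

lemma eq_scaledPrice_of_foc {α ρ x : ℝ} (hC : 0 ≤ C) (hx : 0 < q₀ + x)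
    (h : α * β₁ * ρ * (1 - (q₀ + x) ^ β₁ / ((q₀ + x) ^ β₁ + C)) * (1 - q₀ / (q₀ + x))
      + α * ρ * (q₀ / (q₀ + x)) = 1) :
    α * ρ = scaledPrice q₀ β₁ C x := by
  have hp : 0 < (q₀ + x) ^ β₁ + C := by positivity
  have key : α * ρ * den q₀ β₁ C x = (q₀ + x) * ((q₀ + x) ^ β₁ + C) := by
    rw [den]
    field_simp at h
    linear_combination h
  have hden : den q₀ β₁ C x ≠ 0 := by
    rintro h0
    rw [h0, mul_zero] at key
    exact (mul_pos hx hp).ne' key.symm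
  rw [scaledPrice, eq_div_iff hden, key]

lemma den_pos (hβ₁ : 0 ≤ β₁) (hq₀ : 0 < q₀) (hC : 0 ≤ C) {x : ℝ} (hx : 0 ≤ x) :
    0 < den q₀ β₁ C x := by
  unfold den; positivity

lemma scaledPrice_le (hβ₁ : 0 ≤ β₁) (hq₀ : 0 < q₀) (hC : 0 ≤ C) {x : ℝ} (hx : 0 ≤ x) :
    scaledPrice q₀ β₁ C x ≤ 1 + x / q₀ := by
  have hp : 0 < (q₀ + x) ^ β₁ + C := by positivity
  calc scaledPrice q₀ β₁ C x ≤ (q₀ + x) * ((q₀ + x) ^ β₁ + C) / (q₀ * ((q₀ + x) ^ β₁ + C)) := by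
        refine div_le_div_of_nonneg_left (by positivity) (by positivity) ?_
        unfold den; nlinarith [mul_nonneg (mul_nonneg hβ₁ hC) hx]
    _ = 1 + x / q₀ := by field_simp

lemma hasDerivAt_scaledPrice (hβ₁ : 0 ≤ β₁) (hq₀ : 0 < q₀) (hC : 0 ≤ C) {x : ℝ} (hx : 0 ≤ x) :
    HasDerivAt (scaledPrice q₀ β₁ C) (derivNum q₀ β₁ C x / den q₀ β₁ C x ^ 2) x := by
  have hqx : 0 < q₀ + x := by linarith
  have hid := (hasDerivAt_id' x).const_add q₀
  have hpow : HasDerivAt (fun y => (q₀ + y) ^ β₁) (β₁ * (q₀ + x) ^ (β₁ - 1)) x := by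
    simpa using hid.rpow_const (p := β₁) (Or.inl hqx.ne')
  have hnum : HasDerivAt (fun y => (q₀ + y) * ((q₀ + y) ^ β₁ + C)) _ x :=
    hid.fun_mul (hpow.add_const C)
  have hden : HasDerivAt (den q₀ β₁ C) _ x :=
    ((hasDerivAt_id' x).const_mul (β₁ * C)).fun_add ((hpow.add_const C).const_mul q₀)
  have hsplit : (q₀ + x) ^ (β₁ - 1) * (q₀ + x) = (q₀ + x) ^ β₁ := by
    rw [rpow_sub_one hqx.ne', div_mul_cancel₀ _ hqx.ne']
  refine (hnum.div hden (den_pos hβ₁ hq₀ hC hx).ne').congr_deriv ?_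
  unfold den derivNum
  congr 1
  linear_combination (β₁ * β₁ * C * x) * hsplit

lemma derivNum_pos (hq₀ : 0 < q₀) (hC : 0 < C) {x : ℝ} (hx : 0 < x)
    (hp : 2 * β₁ * C ≤ (q₀ + x) ^ β₁) : 0 < derivNum q₀ β₁ C x := by
  unfold derivNum
  set p := (q₀ + x) ^ β₁
  have hp₀ : 0 ≤ p := by positivity
  nlinarith [mul_pos (mul_pos hq₀ (add_pos_of_nonneg_of_pos hp₀ hC)) hC,
    mul_nonneg (mul_nonneg (mul_nonneg (sq_nonneg β₁) hC.le) hp₀) hx.le]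

lemma den_sq_div_le (hq₀ : 0 < q₀) (hC : 0 < C) {x : ℝ} (hx : 0 < x)
    (hp₁ : C ≤ (q₀ + x) ^ β₁) (hp₂ : 2 * β₁ * C ≤ (q₀ + x) ^ β₁) :
    den q₀ β₁ C x ^ 2 / (x * derivNum q₀ β₁ C x) ≤ 4 * C / ((q₀ + x) ^ β₁ + C) + 4 * q₀ / x := by
  have hM := derivNum_pos hq₀ hC hx hp₂
  unfold den
  unfold derivNum at *
  set p := (q₀ + x) ^ β₁
  have hP : 0 < p + C := by linarith
  set M := q₀ * (p + C) ^ 2 - β₁ * C * q₀ * (p + C) + β₁ ^ 2 * C * p * x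
  have hβC : 0 ≤ β₁ ^ 2 * C * x := by positivity
  have hM₁ : q₀ * (p + C) ^ 2 ≤ 2 * M := by
    nlinarith [mul_nonneg (mul_pos hq₀ hP).le (by linarith : 0 ≤ p + C - 2 * β₁ * C)]
  have hM₂ : β₁ ^ 2 * C * (p + C) * x ≤ 2 * M := by
    nlinarith [mul_nonneg (mul_pos hq₀ hP).le (by linarith : 0 ≤ p + C - β₁ * C)]
  rw [div_add_div _ _ hP.ne' hx.ne', div_le_div_iff₀ (by positivity) (by positivity)]
  nlinarith [mul_nonneg (sq_nonneg (β₁ * C * x - q₀ * (p + C))) (mul_pos hP hx).le,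
    mul_le_mul_of_nonneg_left hM₁ (by positivity : (0 : ℝ) ≤ 2 * q₀ * (p + C) * x),
    mul_le_mul_of_nonneg_left hM₂ (by positivity : (0 : ℝ) ≤ 2 * C * x ^ 2)]

lemma tendsto_mul_deriv_scaledPrice_atTop (hβ₁ : 0 < β₁) (hq₀ : 0 < q₀) (hC : 0 < C) :
    Tendsto (fun x => x * (derivNum q₀ β₁ C x / den q₀ β₁ C x ^ 2)) atTop atTop := by
  have hp : Tendsto (fun x => (q₀ + x) ^ β₁) atTop atTop :=
    (tendsto_rpow_atTop hβ₁).comp (tendsto_atTop_add_const_left _ q₀ tendsto_id)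
  have hbound : Tendsto (fun x => 4 * C / ((q₀ + x) ^ β₁ + C) + 4 * q₀ / x) atTop (𝓝 0) := by
    simpa using ((tendsto_atTop_add_const_right _ C hp).const_div_atTop (4 * C)).add
      (tendsto_id.const_div_atTop (4 * q₀))
  have hlarge : ∀ᶠ x in atTop, 0 < x ∧ C ≤ (q₀ + x) ^ β₁ ∧ 2 * β₁ * C ≤ (q₀ + x) ^ β₁ :=
    (eventually_gt_atTop 0).and ((hp.eventually_ge_atTop C).and (hp.eventually_ge_atTop _))
  have hpos : ∀ᶠ x in atTop, 0 < den q₀ β₁ C x ^ 2 / (x * derivNum q₀ β₁ C x) :=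
    hlarge.mono fun x ⟨hx, _, hp₂⟩ => div_pos (pow_pos (den_pos hβ₁.le hq₀ hC.le hx.le) 2)
      (mul_pos hx (derivNum_pos hq₀ hC hx hp₂))
  have hle : ∀ᶠ x in atTop, den q₀ β₁ C x ^ 2 / (x * derivNum q₀ β₁ C x)
      ≤ 4 * C / ((q₀ + x) ^ β₁ + C) + 4 * q₀ / x :=
    hlarge.mono fun x ⟨hx, hp₁, hp₂⟩ => den_sq_div_le hq₀ hC hx hp₁ hp₂
  have hzero := tendsto_of_tendsto_of_tendsto_of_le_of_le' tendsto_const_nhds hbound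
    (hpos.mono fun _ => le_of_lt) hle
  refine (tendsto_nhdsWithin_iff.2 ⟨hzero, hpos⟩).inv_tendsto_nhdsGT_zero.congr fun x => ?_
  simp only [Pi.inv_apply, inv_div]
  ring

end OptimalPrice

end

theorem statement_9_general
    (α₂ β₁ q₀ C : ℝ) (hα₂ : 0 < α₂) (hβ₁ : 0 < β₁) (hq₀ : 0 < q₀) (hC : 0 < C)
    (r : ℝ → ℝ)
    (κ η P₀ : ℝ → ℝ)
    (hκ : ∀ v, 0 < v → κ v = v * Real.exp (-(α₂ * r v)))
    (hη : ∀ v, 0 < v → η v = (q₀ + κ v) ^ β₁ / ((q₀ + κ v) ^ β₁ + C))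
    (hP₀ : ∀ v, 0 < v → P₀ v = q₀ / (q₀ + κ v))
    (hfoc : ∀ v, 0 < v →
      α₂ * β₁ * r v * (1 - η v) * (1 - P₀ v) + α₂ * r v * P₀ v = 1)
    (hdiff : DifferentiableOn ℝ r (Set.Ioi 0)) :
    Tendsto (fun v => v * deriv r v) atTop (nhds (1 / α₂)) := by
  have hprice : ∀ v, 0 < v →
      α₂ * r v = OptimalPrice.scaledPrice q₀ β₁ C (v * exp (-(α₂ * r v))) := by
    intro v hv
    have h := hfoc v hv
    rw [hη v hv, hP₀ v hv] at h
    rw [← hκ v hv]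
    exact OptimalPrice.eq_scaledPrice_of_foc hC.le (by rw [hκ v hv]; positivity) h
  have hκ_top : Tendsto (fun v => v * exp (-(α₂ * r v))) atTop atTop := by
    refine tendsto_mul_exp_neg_atTop (c := 1) (d := q₀⁻¹) (by positivity) ?_
    filter_upwards [eventually_gt_atTop 0] with v hv
    exact (hprice v hv).trans_le <| (OptimalPrice.scaledPrice_le hβ₁.le hq₀ hC.le
      (by positivity)).trans_eq (by ring)
  have hderiv : ∀ v, 0 < v → α₂ * v * deriv r v = v * exp (-(α₂ * r v))
      * (OptimalPrice.derivNum q₀ β₁ C (v * exp (-(α₂ * r v)))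
        / OptimalPrice.den q₀ β₁ C (v * exp (-(α₂ * r v))) ^ 2) * (1 - α₂ * v * deriv r v) :=
    fun v hv => mul_deriv_eq_of_eq_comp (hdiff.differentiableAt (Ioi_mem_nhds hv))
      (OptimalPrice.hasDerivAt_scaledPrice hβ₁.le hq₀ hC.le (by positivity))
      (eventually_of_mem (Ioi_mem_nhds hv) hprice)
  have hlim : Tendsto (fun v => α₂ * v * deriv r v) atTop (𝓝 1) :=
    tendsto_one_of_eq_mul_one_sub
      ((OptimalPrice.tendsto_mul_deriv_scaledPrice_atTop hβ₁ hq₀ hC).comp hκ_top)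
      (eventually_of_mem (Ioi_mem_atTop 0) hderiv)
  rw [one_div, ← mul_one α₂⁻¹]
  exact (hlim.const_mul α₂⁻¹).congr fun v => by field_simp

theorem statement_9
    (α₂ β₁ q₀ C : ℝ) (hα₂ : 0 < α₂) (hβ₁ : 0 < β₁) (hq₀ : 0 < q₀) (hC : 0 < C)
    (r : ℝ → ℝ) (hr : ∀ v, 0 < v → 0 < r v)
    (κ η P₀ : ℝ → ℝ)
    (hκ : ∀ v, 0 < v → κ v = v * Real.exp (-(α₂ * r v)))
    (hη : ∀ v, 0 < v → η v = (q₀ + κ v) ^ β₁ / ((q₀ + κ v) ^ β₁ + C))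
    (hP₀ : ∀ v, 0 < v → P₀ v = q₀ / (q₀ + κ v))
    (hfoc : ∀ v, 0 < v →
      α₂ * β₁ * r v * (1 - η v) * (1 - P₀ v) + α₂ * r v * P₀ v = 1)
    (hdiff : DifferentiableOn ℝ r (Set.Ioi 0)) :
    Tendsto (fun v => v * deriv r v) atTop (nhds (1 / α₂)) :=
  statement_9_general α₂ β₁ q₀ C hα₂ hβ₁ hq₀ hC r κ η P₀ hκ hη hP₀ hfoc hdiff
end

section
/- Assume in addition that r is differentiable on (0, +∞). Then there exists v̄₁ > 0 such that for all v > v̄₁ one has r′(v) > 0 (so r is strictly increasing on (v̄₁, +∞)) and α₂·v·r′(v) < 1. -/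
/-!
Solving the first-order condition for `α₂ r(v)` expresses it as an explicit function `g` of
`κ = κ(v)` (`markup` below), so that `v = κ · exp (g κ)`. Since `g κ ≤ (q₀ + κ) / q₀`, this
forces `κ(v) → ∞`. Differentiating `α₂ r = g ∘ κ` with `κ' = exp (-α₂ r) (1 - α₂ v r')` gives
`x = g'(κ) κ (1 - x)` for `x = α₂ v r'(v)`, hence `x = g'(κ) κ / (1 + g'(κ) κ) ∈ (0, 1)` as soon as
`g'(κ) > 0`, which holds once `(q₀ + κ)^β₁ > (β₁ - 1) C`.
-/

open Filter Real Topology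

/-- The value of `α₂ r(v)` singled out by the first-order condition, as a function of `x = κ(v)`. -/
noncomputable def markup (β₁ q₀ C x : ℝ) : ℝ :=
  ((q₀ + x) ^ β₁ + C) * (q₀ + x) / (q₀ * ((q₀ + x) ^ β₁ + C) + β₁ * C * x)

section Markup

variable {β₁ q₀ C x : ℝ}

lemma markup_denom_pos (hq₀ : 0 < q₀) (hβ₁ : 0 ≤ β₁) (hC : 0 ≤ C) (hx : 0 ≤ x) :
    0 < q₀ * ((q₀ + x) ^ β₁ + C) + β₁ * C * x := by
  have hS : 0 < (q₀ + x) ^ β₁ := rpow_pos_of_pos (by linarith) _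
  positivity

lemma mul_eq_markup_of_foc (hq₀ : 0 < q₀) (hβ₁ : 0 ≤ β₁) (hC : 0 ≤ C) (hx : 0 ≤ x) {a ρ : ℝ}
    (h : a * β₁ * ρ * (1 - (q₀ + x) ^ β₁ / ((q₀ + x) ^ β₁ + C)) * (1 - q₀ / (q₀ + x))
      + a * ρ * (q₀ / (q₀ + x)) = 1) :
    a * ρ = markup β₁ q₀ C x := by
  have hu : 0 < q₀ + x := by linarith
  have hS : 0 < (q₀ + x) ^ β₁ := rpow_pos_of_pos hu _
  have hSC : 0 < (q₀ + x) ^ β₁ + C := by linarith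
  rw [markup, eq_div_iff (markup_denom_pos hq₀ hβ₁ hC hx).ne']
  field_simp at h
  apply mul_right_cancel₀ hu.ne'
  linear_combination (q₀ + x) * h

lemma markup_le (hq₀ : 0 < q₀) (hβ₁ : 0 ≤ β₁) (hC : 0 ≤ C) (hx : 0 ≤ x) :
    markup β₁ q₀ C x ≤ (q₀ + x) / q₀ := by
  have hS : 0 < (q₀ + x) ^ β₁ := rpow_pos_of_pos (by linarith) _
  have hSC : 0 < (q₀ + x) ^ β₁ + C := by linarith
  calc markup β₁ q₀ C x
      ≤ ((q₀ + x) ^ β₁ + C) * (q₀ + x) / (q₀ * ((q₀ + x) ^ β₁ + C)) :=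
        div_le_div_of_nonneg_left (by positivity) (by positivity)
          (by nlinarith [mul_nonneg hβ₁ hC])
    _ = (q₀ + x) / q₀ := by rw [mul_comm q₀, mul_div_mul_left _ _ hSC.ne']

lemma lt_of_mul_exp_markup_lt (hq₀ : 0 < q₀) (hβ₁ : 0 ≤ β₁) (hC : 0 ≤ C) (hx : 0 ≤ x) {M : ℝ}
    (hM : 0 ≤ M) (h : M * exp ((q₀ + M) / q₀) < x * exp (markup β₁ q₀ C x)) : M < x := by
  by_contra! hxM
  have hle : markup β₁ q₀ C x ≤ (q₀ + M) / q₀ :=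
    (markup_le hq₀ hβ₁ hC hx).trans (div_le_div_of_nonneg_right (by linarith) hq₀.le)
  have := mul_le_mul hxM (exp_le_exp.mpr hle) (exp_pos _).le hM
  linarith

lemma hasDerivAt_markup (hq₀ : 0 < q₀) (hβ₁ : 0 ≤ β₁) (hC : 0 ≤ C) (hx : 0 ≤ x) :
    HasDerivAt (markup β₁ q₀ C)
      ((q₀ * ((q₀ + x) ^ β₁ + C) * ((q₀ + x) ^ β₁ + (1 - β₁) * C)
          + β₁ ^ 2 * C * (q₀ + x) ^ β₁ * x)
        / (q₀ * ((q₀ + x) ^ β₁ + C) + β₁ * C * x) ^ 2) x := by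
  have hu : 0 < q₀ + x := by linarith
  have hpow : (q₀ + x) ^ (β₁ - 1) * (q₀ + x) = (q₀ + x) ^ β₁ := by
    rw [← rpow_add_one hu.ne']; ring_nf
  have hid : HasDerivAt (fun y : ℝ => q₀ + y) 1 x := (hasDerivAt_id x).const_add q₀
  have hS := hid.rpow_const (p := β₁) (Or.inl hu.ne')
  have hN := (hS.add_const C).fun_mul hid
  have hD := ((hS.add_const C).const_mul q₀).fun_add ((hasDerivAt_id' x).const_mul (β₁ * C))
  refine (hN.fun_div hD (markup_denom_pos hq₀ hβ₁ hC hx).ne').congr_deriv ?_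
  rw [← hpow]
  ring

lemma eventually_hasDerivAt_markup_pos (hq₀ : 0 < q₀) (hβ₁ : 0 < β₁) (hC : 0 ≤ C) :
    ∀ᶠ x in atTop, ∃ G > 0, HasDerivAt (markup β₁ q₀ C) G x := by
  have hpow : Tendsto (fun x => (q₀ + x) ^ β₁) atTop atTop :=
    (tendsto_rpow_atTop hβ₁).comp (tendsto_atTop_add_const_left _ q₀ tendsto_id)
  filter_upwards [hpow.eventually_gt_atTop ((β₁ - 1) * C), eventually_ge_atTop 0] with x hlarge hx
  have hS : 0 < (q₀ + x) ^ β₁ := rpow_pos_of_pos (by linarith) _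
  have hnum : 0 < (q₀ + x) ^ β₁ + (1 - β₁) * C := by linarith
  exact ⟨_, by positivity, hasDerivAt_markup hq₀ hβ₁.le hC hx⟩

end Markup

lemma mul_deriv_eq_of_eventuallyEq_comp {f g : ℝ → ℝ} {v f' G : ℝ} (hf : HasDerivAt f f' v)
    (hg : HasDerivAt g G (v * exp (-f v))) (hfg : f =ᶠ[𝓝 v] fun w => g (w * exp (-f w))) :
    v * f' = G * (v * exp (-f v)) * (1 - v * f') := by
  have hκ : HasDerivAt (fun w => w * exp (-f w)) (1 * exp (-f v) + v * (exp (-f v) * -f')) v :=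
    (hasDerivAt_id v).mul hf.neg.exp
  have heq := (hg.comp v hκ).unique (hf.congr_of_eventuallyEq hfg.symm)
  linear_combination (-v) * heq

theorem statement_10_general
    (α₂ β₁ q₀ C : ℝ) (hα₂ : 0 < α₂) (hβ₁ : 0 < β₁) (hq₀ : 0 < q₀) (hC : 0 < C)
    (r : ℝ → ℝ)
    (κ η P₀ : ℝ → ℝ)
    (hκ : ∀ v, 0 < v → κ v = v * Real.exp (-(α₂ * r v)))
    (hη : ∀ v, 0 < v → η v = (q₀ + κ v) ^ β₁ / ((q₀ + κ v) ^ β₁ + C))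
    (hP₀ : ∀ v, 0 < v → P₀ v = q₀ / (q₀ + κ v))
    (hfoc : ∀ v, 0 < v →
      α₂ * β₁ * r v * (1 - η v) * (1 - P₀ v) + α₂ * r v * P₀ v = 1)
    (hdiff : DifferentiableOn ℝ r (Set.Ioi 0)) :
    ∃ vbar₁ > (0 : ℝ), (∀ v, vbar₁ < v → 0 < deriv r v ∧ α₂ * v * deriv r v < 1) ∧
    StrictMonoOn r (Set.Ioi vbar₁) := by
  have hκpos : ∀ v, 0 < v → 0 < κ v := fun v hv => by rw [hκ v hv]; positivity
  have hA : ∀ v, 0 < v → α₂ * r v = markup β₁ q₀ C (κ v) := fun v hv =>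
    mul_eq_markup_of_foc hq₀ hβ₁.le hC.le (hκpos v hv).le <| by
      rw [← hη v hv, ← hP₀ v hv]; exact hfoc v hv
  obtain ⟨M, hM⟩ := eventually_atTop.1
    ((eventually_hasDerivAt_markup_pos hq₀ hβ₁ hC.le).and (eventually_gt_atTop 0))
  have hM₀ : 0 < M := (hM M le_rfl).2
  set vbar := M * exp ((q₀ + M) / q₀)
  have hvbar : 0 < vbar := by positivity
  have hκM : ∀ v, vbar < v → M < κ v := fun v hv => by
    have hv₀ := hvbar.trans hv
    refine lt_of_mul_exp_markup_lt hq₀ hβ₁.le hC.le (hκpos v hv₀).le hM₀.le ?_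
    rwa [← hA v hv₀, hκ v hv₀, mul_assoc, ← exp_add, neg_add_cancel, exp_zero, mul_one]
  have hderiv : ∀ v, vbar < v → 0 < deriv r v ∧ α₂ * v * deriv r v < 1 := by
    intro v hv
    have hv₀ := hvbar.trans hv
    obtain ⟨G, hG, hg⟩ := (hM (κ v) (hκM v hv).le).1
    have hr := (hdiff.differentiableAt (Ioi_mem_nhds hv₀)).hasDerivAt
    have key := mul_deriv_eq_of_eventuallyEq_comp (hr.const_mul α₂) (hκ v hv₀ ▸ hg) <| by
      filter_upwards [Ioi_mem_nhds hv₀] with w hw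
      rw [← hκ w hw]
      exact hA w hw
    rw [← hκ v hv₀] at key
    have hGκ : 0 < G * κ v := mul_pos hG (hκpos v hv₀)
    have hlt : α₂ * v * deriv r v < 1 := by nlinarith
    have hpos : 0 < α₂ * v * deriv r v := by nlinarith
    exact ⟨pos_of_mul_pos_right hpos (by positivity), hlt⟩
  refine ⟨vbar, hvbar, hderiv, strictMonoOn_of_deriv_pos (convex_Ioi vbar)
    (hdiff.continuousOn.mono fun x hx => hvbar.trans hx) fun x hx => ?_⟩
  rw [interior_Ioi] at hx
  exact (hderiv x hx).1

theorem statement_10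
    (α₂ β₁ q₀ C : ℝ) (hα₂ : 0 < α₂) (hβ₁ : 0 < β₁) (hq₀ : 0 < q₀) (hC : 0 < C)
    (r : ℝ → ℝ) (hr : ∀ v, 0 < v → 0 < r v)
    (κ η P₀ : ℝ → ℝ)
    (hκ : ∀ v, 0 < v → κ v = v * Real.exp (-(α₂ * r v)))
    (hη : ∀ v, 0 < v → η v = (q₀ + κ v) ^ β₁ / ((q₀ + κ v) ^ β₁ + C))
    (hP₀ : ∀ v, 0 < v → P₀ v = q₀ / (q₀ + κ v))
    (hfoc : ∀ v, 0 < v →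
      α₂ * β₁ * r v * (1 - η v) * (1 - P₀ v) + α₂ * r v * P₀ v = 1)
    (hdiff : DifferentiableOn ℝ r (Set.Ioi 0)) :
    ∃ vbar₁ > (0 : ℝ), (∀ v, vbar₁ < v → 0 < deriv r v ∧ α₂ * v * deriv r v < 1) ∧
    StrictMonoOn r (Set.Ioi vbar₁) :=
  statement_10_general α₂ β₁ q₀ C hα₂ hβ₁ hq₀ hC r κ η P₀ hκ hη hP₀ hfoc hdiff
end

section
/- Price convergence theorem: assume in addition that r is differentiable on (0, +∞). Then r(v)/ln(v) tends to 1/α₂ as v tends to +∞. -/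
/-!
Since `log κ = log v - α₂ r`, the claim is `log κ = o(log v)`. The first-order condition says
`α₂ r = 1 / F(κ)` for an explicit factor `F`. From `F ≥ P₀ = q₀ / (q₀ + κ)` we get
`α₂ r ≤ 1 + κ / q₀`, which rules out `κ < 1` once `log v > 1 + 1 / q₀`. For `κ ≥ 1` both summands
of `F` decay at least like `(q₀ + κ)^(-m)` with `m = min 1 β₁`, so `κ^m ≲ α₂ r ≤ log v`, and
`log κ = O(log log v)`.
-/

open Filter Real Asymptotics

/-- The first-order condition reads `α₂ r * focFactor β₁ q₀ C κ = 1`: this is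
`β₁ (1 - η) (1 - P₀) + P₀` with `η` and `P₀` written out in terms of `κ = k`. -/
noncomputable def focFactor (β₁ q₀ C k : ℝ) : ℝ :=
  β₁ * (1 - (q₀ + k) ^ β₁ / ((q₀ + k) ^ β₁ + C)) * (1 - q₀ / (q₀ + k)) + q₀ / (q₀ + k)

section focFactor

variable {β₁ q₀ C k x : ℝ}

lemma one_sub_div_add_nonneg (hq₀ : 0 < q₀) (hk : 0 ≤ k) : 0 ≤ 1 - q₀ / (q₀ + k) := by
  rw [sub_nonneg, div_le_one (by linarith)]
  linarith

lemma div_le_focFactor (hβ₁ : 0 ≤ β₁) (hq₀ : 0 < q₀) (hC : 0 ≤ C) (hk : 0 ≤ k) :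
    q₀ / (q₀ + k) ≤ focFactor β₁ q₀ C k := by
  have hη : 0 ≤ 1 - (q₀ + k) ^ β₁ / ((q₀ + k) ^ β₁ + C) := by
    rw [sub_nonneg, div_le_one (by positivity)]
    linarith
  have := mul_nonneg (mul_nonneg hβ₁ hη) (one_sub_div_add_nonneg hq₀ hk)
  unfold focFactor
  linarith

lemma focFactor_le (hβ₁ : 0 ≤ β₁) (hq₀ : 0 < q₀) (hC : 0 ≤ C) (hk : 0 ≤ k) (hS : 1 ≤ q₀ + k) :
    focFactor β₁ q₀ C k ≤ (β₁ * C + q₀) / (q₀ + k) ^ min 1 β₁ := by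
  have hP₀ := one_sub_div_add_nonneg hq₀ hk
  set S := q₀ + k
  have hη : 1 - S ^ β₁ / (S ^ β₁ + C) ≤ C / S ^ min 1 β₁ := by
    rw [one_sub_div (by positivity), add_sub_cancel_left]
    gcongr
    calc S ^ min 1 β₁ ≤ S ^ β₁ := rpow_le_rpow_of_exponent_le hS (min_le_right _ _)
      _ ≤ S ^ β₁ + C := le_add_of_nonneg_right hC
  calc focFactor β₁ q₀ C k
      ≤ β₁ * (C / S ^ min 1 β₁) * 1 + q₀ / S ^ min 1 β₁ := by
        unfold focFactor
        gcongr
        · exact sub_le_self _ (by positivity)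
        · simpa using rpow_le_rpow_of_exponent_le hS (min_le_left 1 β₁)
    _ = (β₁ * C + q₀) / S ^ min 1 β₁ := by ring

lemma le_one_add_div_of_mul_focFactor_eq_one (hβ₁ : 0 ≤ β₁) (hq₀ : 0 < q₀) (hC : 0 ≤ C)
    (hk : 0 ≤ k) (hx : x * focFactor β₁ q₀ C k = 1) : x ≤ 1 + k / q₀ := by
  have hF := div_le_focFactor hβ₁ hq₀ hC hk
  have hF₀ : 0 < focFactor β₁ q₀ C k := hF.trans_lt' (by positivity)
  rw [eq_div_of_mul_eq hF₀.ne' hx, div_le_iff₀ hF₀]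
  calc 1 = (1 + k / q₀) * (q₀ / (q₀ + k)) := by field_simp
    _ ≤ (1 + k / q₀) * focFactor β₁ q₀ C k := by gcongr

lemma rpow_le_mul_of_mul_focFactor_eq_one (hβ₁ : 0 ≤ β₁) (hq₀ : 0 < q₀) (hC : 0 ≤ C)
    (hk : 1 ≤ k) (hx : x * focFactor β₁ q₀ C k = 1) :
    k ^ min 1 β₁ ≤ (β₁ * C + q₀) * x := by
  have hF₀ : 0 < focFactor β₁ q₀ C k :=
    (div_le_focFactor hβ₁ hq₀ hC (by linarith)).trans_lt' (by positivity)
  have hF := focFactor_le (k := k) hβ₁ hq₀ hC (by linarith) (by linarith)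
  rw [le_div_iff₀ (by positivity)] at hF
  have hx₀ : 0 < x := pos_of_mul_pos_left (hx ▸ one_pos) hF₀.le
  calc k ^ min 1 β₁ ≤ (q₀ + k) ^ min 1 β₁ := by gcongr; linarith
    _ = x * (focFactor β₁ q₀ C k * (q₀ + k) ^ min 1 β₁) := by rw [← mul_assoc, hx, one_mul]
    _ ≤ x * (β₁ * C + q₀) := by gcongr
    _ = (β₁ * C + q₀) * x := mul_comm _ _

end focFactor

lemma isLittleO_log_comp_of_rpow_le_mul_log {f : ℝ → ℝ} {m K : ℝ} (hm : 0 < m) (hK : 0 < K)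
    (hf : ∀ᶠ v in atTop, 1 ≤ f v ∧ f v ^ m ≤ K * log v) :
    (fun v => log (f v)) =o[atTop] log := by
  have hloglog : (fun v => log K + log (log v)) =o[atTop] log :=
    (isLittleO_const_left.2 (Or.inr (tendsto_norm_atTop_atTop.comp tendsto_log_atTop))).add
      (isLittleO_log_id_atTop.comp_tendsto tendsto_log_atTop)
  refine IsBigO.trans_isLittleO (IsBigO.of_bound (1 / m) ?_) hloglog
  filter_upwards [hf, eventually_gt_atTop 1] with v ⟨hf₁, hf_le⟩ hv
  have hlogf : 0 ≤ log (f v) := log_nonneg hf₁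
  have hbound : m * log (f v) ≤ log K + log (log v) := by
    rw [← log_rpow (by linarith), ← log_mul hK.ne' (log_pos hv).ne']
    exact log_le_log (by positivity) hf_le
  rw [norm_of_nonneg hlogf, norm_of_nonneg (by nlinarith), div_mul_eq_mul_div, le_div_iff₀ hm]
  linarith

theorem statement_11_general
    (α₂ β₁ q₀ C : ℝ) (hα₂ : 0 < α₂) (hβ₁ : 0 < β₁) (hq₀ : 0 < q₀) (hC : 0 < C)
    (r : ℝ → ℝ)
    (κ η P₀ : ℝ → ℝ)
    (hκ : ∀ v, 0 < v → κ v = v * Real.exp (-(α₂ * r v)))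
    (hη : ∀ v, 0 < v → η v = (q₀ + κ v) ^ β₁ / ((q₀ + κ v) ^ β₁ + C))
    (hP₀ : ∀ v, 0 < v → P₀ v = q₀ / (q₀ + κ v))
    (hfoc : ∀ v, 0 < v →
      α₂ * β₁ * r v * (1 - η v) * (1 - P₀ v) + α₂ * r v * P₀ v = 1) :
    Tendsto (fun v => r v / Real.log v) atTop (nhds (1 / α₂)) := by
  have hfoc' (v : ℝ) (hv : 0 < v) : α₂ * r v * focFactor β₁ q₀ C (κ v) = 1 := by
    rw [focFactor, ← hη v hv, ← hP₀ v hv]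
    linear_combination hfoc v hv
  have hκ₀ (v : ℝ) (hv : 0 < v) : 0 < κ v := by
    rw [hκ v hv]
    positivity
  have hlogκ (v : ℝ) (hv : 0 < v) : log (κ v) = log v - α₂ * r v := by
    rw [hκ v hv, log_mul hv.ne' (exp_pos _).ne', log_exp]
    ring
  have hκ₁ : ∀ᶠ v in atTop, 1 ≤ κ v := by
    filter_upwards [eventually_gt_atTop 0, eventually_ge_atTop (exp (1 + 1 / q₀))]
      with v hv hv_ge
    by_contra! hlt
    have hx := le_one_add_div_of_mul_focFactor_eq_one hβ₁.le hq₀ hC.le (hκ₀ v hv).le (hfoc' v hv)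
    have : κ v / q₀ < 1 / q₀ := by gcongr
    have := (le_log_iff_exp_le hv).2 hv_ge
    linarith [hlogκ v hv, log_neg (hκ₀ v hv) hlt]
  have hpoly : ∀ᶠ v in atTop, 1 ≤ κ v ∧ κ v ^ min 1 β₁ ≤ (β₁ * C + q₀) * log v := by
    filter_upwards [eventually_gt_atTop 0, hκ₁] with v hv hv₁
    refine ⟨hv₁, (rpow_le_mul_of_mul_focFactor_eq_one hβ₁.le hq₀ hC.le hv₁ (hfoc' v hv)).trans ?_⟩
    gcongr
    linarith [hlogκ v hv, log_nonneg hv₁]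
  have hlim := (isLittleO_log_comp_of_rpow_le_mul_log (lt_min one_pos hβ₁) (by positivity)
    hpoly).tendsto_div_nhds_zero
  have hratio : Tendsto (fun v => 1 / α₂ * (1 - log (κ v) / log v)) atTop (nhds (1 / α₂)) := by
    simpa using (hlim.const_sub 1).const_mul (1 / α₂)
  refine hratio.congr' ?_
  filter_upwards [eventually_gt_atTop 1] with v hv
  rw [hlogκ v (by linarith)]
  field_simp [(log_pos hv).ne']
  ring

theorem statement_11
    (α₂ β₁ q₀ C : ℝ) (hα₂ : 0 < α₂) (hβ₁ : 0 < β₁) (hq₀ : 0 < q₀) (hC : 0 < C)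
    (r : ℝ → ℝ) (hr : ∀ v, 0 < v → 0 < r v)
    (κ η P₀ : ℝ → ℝ)
    (hκ : ∀ v, 0 < v → κ v = v * Real.exp (-(α₂ * r v)))
    (hη : ∀ v, 0 < v → η v = (q₀ + κ v) ^ β₁ / ((q₀ + κ v) ^ β₁ + C))
    (hP₀ : ∀ v, 0 < v → P₀ v = q₀ / (q₀ + κ v))
    (hfoc : ∀ v, 0 < v →
      α₂ * β₁ * r v * (1 - η v) * (1 - P₀ v) + α₂ * r v * P₀ v = 1)
    (hdiff : DifferentiableOn ℝ r (Set.Ioi 0)) :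
    Tendsto (fun v => r v / Real.log v) atTop (nhds (1 / α₂)) :=
  statement_11_general α₂ β₁ q₀ C hα₂ hβ₁ hq₀ hC r κ η P₀ hκ hη hP₀ hfoc
end

section
/- Assume in addition that r is twice differentiable on (0, +∞). Then v²·r″(v) tends to −1/α₂ as v tends to +∞. -/
/-!
The first-order condition says exactly that `α₂ r(v) = φ(κ(v))` for an explicit function `φ`.
Differentiating `κ = v e^{-φ(κ)}` gives `α₂ v r'(v) = A / (1 + A)` with `A(t) = t φ'(t)`, and
differentiating once more `α₂ v² r''(v) = t A'(t) / (1 + A)³ - A / (1 + A)` at `t = κ(v)`.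
Since `φ(t) ≤ 1 + t / q₀`, `κ(v) → ∞`; and as `t → ∞`, `A(t) → ∞` while `t A'(t) = O(A(t))`,
so the right-hand side tends to `-1`.
-/

open Filter Real Topology

section Calculus

variable {α : ℝ} {r κ φ φ' A' : ℝ → ℝ}

theorem hasDerivAt_of_eq_mul_exp (hκ : ∀ v, 0 < v → κ v = v * exp (-(α * r v)))
    {v r' : ℝ} (hv : 0 < v) (hr : HasDerivAt r r' v) :
    HasDerivAt κ (exp (-(α * r v)) * (1 - α * v * r')) v := by
  have he : HasDerivAt (fun w => exp (-(α * r w))) (exp (-(α * r v)) * -(α * r')) v :=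
    (hr.const_mul α).neg.exp
  refine (((hasDerivAt_id' v).mul he).congr_of_eventuallyEq ?_).congr_deriv (by ring)
  filter_upwards [Ioi_mem_nhds hv] with w hw using hκ w hw

theorem mul_deriv_mul_one_add_eq (hκ : ∀ v, 0 < v → κ v = v * exp (-(α * r v)))
    (hrφ : ∀ v, 0 < v → α * r v = φ (κ v)) (hφ : ∀ t, 0 < t → HasDerivAt φ (φ' t) t)
    {v r' : ℝ} (hv : 0 < v) (hr : HasDerivAt r r' v) :
    α * v * r' * (1 + κ v * φ' (κ v)) = κ v * φ' (κ v) := by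
  have hκv : 0 < κ v := by rw [hκ v hv]; positivity
  have hcomp := (hφ (κ v) hκv).comp v (hasDerivAt_of_eq_mul_exp hκ hv hr)
  have heq : (fun w => α * r w) =ᶠ[𝓝 v] φ ∘ κ := by
    filter_upwards [Ioi_mem_nhds hv] with w hw using hrφ w hw
  have hderiv := (hr.const_mul α).unique (hcomp.congr_of_eventuallyEq heq)
  linear_combination v * hderiv - φ' (κ v) * (1 - α * v * r') * hκ v hv

theorem sq_mul_deriv_deriv_eq (hα : α ≠ 0) (hκ : ∀ v, 0 < v → κ v = v * exp (-(α * r v)))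
    (hrφ : ∀ v, 0 < v → α * r v = φ (κ v)) (hφ : ∀ t, 0 < t → HasDerivAt φ (φ' t) t)
    (hA : ∀ t, 0 < t → HasDerivAt (fun s => s * φ' s) (A' t) t)
    (hr : DifferentiableOn ℝ r (Set.Ioi 0)) (hr' : DifferentiableOn ℝ (deriv r) (Set.Ioi 0))
    {v : ℝ} (hv : 0 < v) :
    v ^ 2 * deriv (deriv r) v = (κ v * A' (κ v) / (1 + κ v * φ' (κ v)) ^ 3
      - κ v * φ' (κ v) / (1 + κ v * φ' (κ v))) / α := by
  have hrd : ∀ w, 0 < w → HasDerivAt r (deriv r w) w := fun w hw =>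
    (hr.differentiableAt (Ioi_mem_nhds hw)).hasDerivAt
  have hκv : 0 < κ v := by rw [hκ v hv]; positivity
  have helast := mul_deriv_mul_one_add_eq hκ hrφ hφ hv (hrd v hv)
  set a := κ v * φ' (κ v)
  have ha : 1 + a ≠ 0 := fun h => by
    rw [h, mul_zero] at helast; rw [← helast] at h; norm_num at h
  have hAκ := (hA (κ v) hκv).comp v (hasDerivAt_of_eq_mul_exp hκ hv (hrd v hv))
  have hG : HasDerivAt (fun w => α * w * deriv r w * (1 + κ w * φ' (κ w)))
      ((α * deriv r v + α * v * deriv (deriv r) v) * (1 + a) + α * v * deriv r v *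
        (A' (κ v) * (exp (-(α * r v)) * (1 - α * v * deriv r v)))) v :=
    ((((hasDerivAt_id' v).const_mul α).mul
      (hr'.differentiableAt (Ioi_mem_nhds hv)).hasDerivAt).mul (hAκ.const_add 1)).congr_deriv
      (by simp only [Function.comp_apply, Pi.mul_apply]; ring)
  have heq : (fun w => α * w * deriv r w * (1 + κ w * φ' (κ w))) =ᶠ[𝓝 v]
      (fun s => s * φ' s) ∘ κ := by
    filter_upwards [Ioi_mem_nhds hv] with w hw using
      mul_deriv_mul_one_add_eq hκ hrφ hφ hw (hrd w hw)
  have h2 := hG.unique (hAκ.congr_of_eventuallyEq heq)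
  have key :
      α * (v ^ 2 * deriv (deriv r) v) * (1 + a) ^ 3 = κ v * A' (κ v) - a * (1 + a) ^ 2 := by
    linear_combination (1 + a) ^ 2 * v * h2
      - (1 + a) ^ 2 * A' (κ v) * (1 - α * v * deriv r v) ^ 2 * hκ v hv
      - (A' (κ v) * κ v * ((1 + a) * (1 - α * v * deriv r v) + 1) + (1 + a) ^ 2) * helast
  field_simp
  linear_combination key

theorem tendsto_atTop_of_eq_mul_exp (hκ : ∀ v, 0 < v → κ v = v * exp (-(α * r v)))
    (hrφ : ∀ v, 0 < v → α * r v = φ (κ v)) {a b : ℝ} (hb : 0 ≤ b)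
    (hφ : ∀ t, 0 < t → φ t ≤ a + b * t) : Tendsto κ atTop atTop := by
  have hlog : Tendsto (fun v => (log v - a + 1) / (1 + b)) atTop atTop :=
    ((tendsto_atTop_add_const_right _ (-a + 1) tendsto_log_atTop).congr fun v => by
      ring).atTop_div_const (by linarith)
  refine tendsto_atTop_mono' _ ?_ hlog
  filter_upwards [eventually_gt_atTop 0] with v hv
  have hκv : 0 < κ v := by rw [hκ v hv]; positivity
  have hlogκ : log (κ v) = log v - α * r v := by
    rw [hκ v hv, log_mul hv.ne' (exp_pos _).ne', log_exp]; ring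
  rw [div_le_iff₀ (by linarith)]
  nlinarith [log_le_sub_one_of_pos hκv, hφ _ hκv, hrφ v hv]

theorem tendsto_mul_div_one_add_pow_three_sub_div_one_add {A A' : ℝ → ℝ} {M : ℝ}
    (hA : Tendsto A atTop atTop) (hA' : ∀ᶠ t in atTop, |t * A' t| ≤ M * A t) :
    Tendsto (fun t => t * A' t / (1 + A t) ^ 3 - A t / (1 + A t)) atTop (𝓝 (-1)) := by
  have h1A : Tendsto (fun t => 1 + A t) atTop atTop := tendsto_atTop_add_const_left _ 1 hA
  have hfirst : Tendsto (fun t => t * A' t / (1 + A t) ^ 3) atTop (𝓝 0) := by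
    refine squeeze_zero_norm' ?_ (tendsto_const_nhds.div_atTop
      ((tendsto_pow_atTop two_ne_zero).comp h1A) : Tendsto (fun t => M / (1 + A t) ^ 2) atTop (𝓝 0))
    filter_upwards [hA', hA.eventually_gt_atTop 0] with t ht hA0
    rw [Real.norm_eq_abs, abs_div, abs_pow, abs_of_nonneg (by linarith : 0 ≤ 1 + A t),
      div_le_div_iff₀ (by positivity) (by positivity)]
    have hM : 0 ≤ M := nonneg_of_mul_nonneg_left ((abs_nonneg _).trans ht) hA0
    calc |t * A' t| * (1 + A t) ^ 2 ≤ M * A t * (1 + A t) ^ 2 := by gcongr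
      _ ≤ M * (1 + A t) ^ 3 := by
        rw [pow_succ' _ 2, ← mul_assoc]; gcongr; linarith
  have hsecond : Tendsto (fun t => A t / (1 + A t)) atTop (𝓝 1) := by
    refine (by simpa using (tendsto_const_nhds (x := (1 : ℝ))).sub h1A.inv_tendsto_atTop :
      Tendsto (fun t => 1 - (1 + A t)⁻¹) atTop (𝓝 1)).congr' ?_
    filter_upwards [hA.eventually_ge_atTop 0] with t hA0
    field_simp
    ring
  simpa using hfirst.sub hsecond

end Calculus

namespace OptimalPrice

variable (β q C : ℝ)

noncomputable def X (t : ℝ) : ℝ := (q + t) ^ β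

noncomputable def X' (t : ℝ) : ℝ := β * X β q t / (q + t)

noncomputable def D (t : ℝ) : ℝ := q * X β q t + q * C + β * C * t

noncomputable def D' (t : ℝ) : ℝ := q * X' β q t + β * C

noncomputable def E (t : ℝ) : ℝ :=
  q * X β q t ^ 2 + β ^ 2 * C * t * X β q t + q * C * (2 - β) * X β q t + q * C ^ 2 * (1 - β)

noncomputable def E' (t : ℝ) : ℝ :=
  2 * q * X β q t * X' β q t + β ^ 2 * C * (X β q t + t * X' β q t)
    + q * C * (2 - β) * X' β q t

noncomputable def phi (t : ℝ) : ℝ := (q + t) * (X β q t + C) / D β q C t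

noncomputable def A' (t : ℝ) : ℝ :=
  (E β q C t + t * E' β q C t) / D β q C t ^ 2
    - 2 * t * E β q C t * D' β q C t / D β q C t ^ 3

variable {β q C} {t : ℝ}

theorem hasDerivAt_X (h : 0 < q + t) : HasDerivAt (X β q) (X' β q t) t := by
  have := (Real.hasDerivAt_rpow_const (p := β) (Or.inl h.ne')).comp t
    ((hasDerivAt_id t).const_add q)
  refine this.congr_deriv ?_
  rw [X', X, Real.rpow_sub_one h.ne']
  simp only [mul_one]; ring

theorem hasDerivAt_D (h : 0 < q + t) : HasDerivAt (D β q C) (D' β q C t) t :=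
  ((((hasDerivAt_X h).const_mul q).add_const (q * C)).add
    ((hasDerivAt_id t).const_mul (β * C))).congr_deriv (by simp [D'])

theorem hasDerivAt_E (h : 0 < q + t) : HasDerivAt (E β q C) (E' β q C t) t := by
  have hX := hasDerivAt_X (β := β) h
  exact (((((hX.pow 2).const_mul q).add (((hasDerivAt_id t).const_mul (β ^ 2 * C)).mul hX)).add
    (hX.const_mul (q * C * (2 - β)))).add_const (q * C ^ 2 * (1 - β))).congr_deriv
    (by simp [E']; ring)

theorem hasDerivAt_phi (h : 0 < q + t) (hD : D β q C t ≠ 0) :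
    HasDerivAt (phi β q C) (E β q C t / D β q C t ^ 2) t := by
  have hN : HasDerivAt (fun s => (q + s) * (X β q s + C))
      (1 * (X β q t + C) + (q + t) * X' β q t) t :=
    ((hasDerivAt_id' t).const_add q).mul ((hasDerivAt_X h).add_const C)
  refine (hN.div (hasDerivAt_D h) hD).congr_deriv ?_
  simp only [D, D', E, X']
  field_simp
  ring

theorem hasDerivAt_mul_E_div (h : 0 < q + t) (hD : D β q C t ≠ 0) :
    HasDerivAt (fun s => s * (E β q C s / D β q C s ^ 2)) (A' β q C t) t := by
  have := (hasDerivAt_id' t).mul ((hasDerivAt_E (β := β) (C := C) h).div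
    ((hasDerivAt_D (C := C) h).pow 2) (pow_ne_zero 2 hD))
  refine this.congr_deriv ?_
  simp only [A', one_mul, Nat.cast_ofNat, Pi.div_apply, Pi.pow_apply]
  field_simp
  ring

theorem X_pos (h : 0 < q + t) : 0 < X β q t := rpow_pos_of_pos h β

theorem D_pos (hβ : 0 ≤ β) (hq : 0 < q) (hC : 0 ≤ C) (ht : 0 ≤ t) : 0 < D β q C t := by
  have := X_pos (β := β) (by linarith : 0 < q + t)
  unfold D; positivity

theorem mul_eq_phi_of_foc (hβ : 0 ≤ β) (hq : 0 < q) (hC : 0 ≤ C) {α ρ k : ℝ} (hk : 0 ≤ k)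
    (h : α * β * ρ * (1 - (q + k) ^ β / ((q + k) ^ β + C)) * (1 - q / (q + k))
      + α * ρ * (q / (q + k)) = 1) :
    α * ρ = phi β q C k := by
  have hX := X_pos (β := β) (by linarith : 0 < q + k)
  have hD := D_pos hβ hq hC hk
  rw [X] at hX
  rw [phi, eq_div_iff hD.ne', D, X]
  field_simp at h
  linear_combination h

theorem phi_le_one_add (hβ : 0 ≤ β) (hq : 0 < q) (hC : 0 ≤ C) (ht : 0 ≤ t) :
    phi β q C t ≤ 1 + q⁻¹ * t := by
  have hX := X_pos (β := β) (by linarith : 0 < q + t)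
  rw [phi, div_le_iff₀ (D_pos hβ hq hC ht), D]
  field_simp
  nlinarith [mul_nonneg (mul_nonneg (mul_nonneg hβ hC) ht) (by linarith : 0 ≤ q + t)]

theorem tendsto_X_atTop (hβ : 0 < β) : Tendsto (X β q) atTop atTop :=
  (tendsto_rpow_atTop hβ).comp (tendsto_atTop_add_const_left _ q tendsto_id)

theorem mul_X'_nonneg (hβ : 0 ≤ β) (hq : 0 < q) (ht : 0 ≤ t) : 0 ≤ t * X' β q t := by
  have := X_pos (β := β) (by linarith : 0 < q + t)
  unfold X'; positivity

theorem mul_X'_le (hβ : 0 ≤ β) (hq : 0 < q) (ht : 0 ≤ t) : t * X' β q t ≤ β * X β q t := by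
  have := X_pos (β := β) (by linarith : 0 < q + t)
  rw [X', mul_div_assoc', div_le_iff₀ (by linarith)]
  nlinarith [mul_nonneg hβ this.le]

theorem abs_mul_D'_le (hβ : 0 ≤ β) (hq : 0 < q) (hC : 0 ≤ C) (ht : 0 ≤ t) :
    |t * D' β q C t| ≤ (β + 1) * D β q C t := by
  have hX := X_pos (β := β) (by linarith : 0 < q + t)
  have hX'₀ := mul_X'_nonneg hβ hq ht
  have hX'₁ := mul_X'_le hβ hq ht
  have hCt := mul_nonneg (mul_nonneg hβ hC) ht
  rw [abs_of_nonneg (by rw [D']; nlinarith), D', D]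
  nlinarith [mul_nonneg (mul_nonneg (mul_nonneg hβ hβ) hC) ht, mul_nonneg hq.le hC,
    mul_nonneg hβ (mul_nonneg hq.le hC)]

theorem eventually_le_two_mul_E (hβ : 0 < β) (hq : 0 < q) (hC : 0 ≤ C) :
    ∀ᶠ t in atTop, X β q t * (q * X β q t + β ^ 2 * C * t) ≤ 2 * E β q C t := by
  filter_upwards [(tendsto_X_atTop (q := q) hβ).eventually_ge_atTop
    (1 + 4 * C * (2 + β) + 4 * C ^ 2 * (1 + β)), eventually_ge_atTop 0] with t hX ht
  have h₁ : 2 * C * (2 + β) * X β q t ≤ X β q t ^ 2 / 2 := by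
    nlinarith [mul_nonneg hC hβ.le, mul_nonneg (sq_nonneg C) hβ.le]
  have h₂ : 2 * C ^ 2 * (1 + β) ≤ X β q t ^ 2 / 2 := by
    nlinarith [mul_nonneg hC hβ.le, mul_nonneg (sq_nonneg C) hβ.le]
  have hX₀ := (X_pos (β := β) (by linarith : 0 < q + t)).le
  rw [E]
  nlinarith [mul_le_mul_of_nonneg_left h₁ hq.le, mul_le_mul_of_nonneg_left h₂ hq.le,
    mul_nonneg (mul_nonneg (mul_nonneg hq.le hC) hX₀) hβ.le,
    mul_nonneg (mul_nonneg hq.le (sq_nonneg C)) hβ.le,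
    mul_nonneg (mul_nonneg (mul_nonneg (sq_nonneg β) hC) ht) hX₀]

theorem eventually_abs_mul_E'_le (hβ : 0 < β) (hq : 0 < q) (hC : 0 ≤ C) :
    ∀ᶠ t in atTop,
      |t * E' β q C t| ≤ (2 * β + 2) * (X β q t * (q * X β q t + β ^ 2 * C * t)) := by
  filter_upwards [(tendsto_X_atTop (q := q) hβ).eventually_ge_atTop (C * (2 + β) * β),
    eventually_ge_atTop 0] with t hX ht
  have hX₀ := (X_pos (β := β) (by linarith : 0 < q + t)).le
  have hy₀ := mul_X'_nonneg hβ.le hq ht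
  have hy₁ := mul_X'_le hβ.le hq ht
  set x := X β q t
  set y := t * X' β q t
  have h₁ : 2 * q * x * y ≤ 2 * β * q * x ^ 2 := by
    nlinarith [mul_le_mul_of_nonneg_left hy₁ hq.le]
  have h₂ : β ^ 2 * C * (t * x + t * y) ≤ (1 + β) * (β ^ 2 * C * t * x) := by
    nlinarith [mul_le_mul_of_nonneg_left hy₁ (mul_nonneg (mul_nonneg (sq_nonneg β) hC) ht)]
  have h₃ : q * C * (2 + β) * y ≤ q * x ^ 2 := by
    nlinarith [mul_le_mul_of_nonneg_left hy₁
        (mul_nonneg (mul_nonneg hq.le hC) (by linarith : (0:ℝ) ≤ 2 + β)),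
      mul_le_mul_of_nonneg_left hX (mul_nonneg hq.le hX₀)]
  have hE' : t * E' β q C t = 2 * q * x * y + β ^ 2 * C * (t * x + t * y)
      + q * C * (2 - β) * y := by
    simp only [E', x, y]; ring
  rw [hE', abs_le]
  have h₄ : 0 ≤ q * C * β * y := by positivity
  have h₅ : 0 ≤ q * x * y := by positivity
  have h₆ : 0 ≤ β ^ 2 * C * (t * x + t * y) := by positivity
  have h₇ : 0 ≤ β * q * x ^ 2 := by positivity
  have h₈ : 0 ≤ β * (β ^ 2 * C * t * x) := by positivity
  constructor <;> nlinarith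

theorem tendsto_mul_E_div_atTop (hβ : 0 < β) (hq : 0 < q) (hC : 0 < C) :
    Tendsto (fun t => t * (E β q C t / D β q C t ^ 2)) atTop atTop := by
  have hmin : Tendsto (fun t => t / (16 * q) ⊓ X β q t / (4 * C)) atTop atTop :=
    tendsto_inf_atTop atTop (tendsto_id.atTop_div_const (by positivity : 0 < 16 * q))
    ((tendsto_X_atTop (q := q) hβ).atTop_div_const (by positivity : 0 < 4 * C))
  refine tendsto_atTop_mono' _ ?_ hmin
  filter_upwards [eventually_le_two_mul_E hβ hq hC.le,
    (tendsto_X_atTop (q := q) hβ).eventually_ge_atTop C, eventually_ge_atTop 0] with t hE hX ht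
  have hX₀ := X_pos (β := β) (by linarith : 0 < q + t)
  have hD := D_pos hβ.le hq hC.le ht
  set m := t / (16 * q) ⊓ X β q t / (4 * C)
  have hm₁ : m ≤ t / (16 * q) := inf_le_left
  have hm₂ : m ≤ X β q t / (4 * C) := inf_le_right
  have hm₀ : 0 ≤ m := le_inf (by positivity) (by positivity)
  have hD₂ : D β q C t ^ 2 ≤ 8 * q ^ 2 * X β q t ^ 2 + 2 * β ^ 2 * C ^ 2 * t ^ 2 := by
    have : D β q C t ≤ 2 * q * X β q t + β * C * t := by
      rw [D]; nlinarith [mul_le_mul_of_nonneg_left hX hq.le]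
    nlinarith [sq_nonneg (2 * q * X β q t - β * C * t)]
  rw [mul_div_assoc', le_div_iff₀ (by positivity)]
  calc m * D β q C t ^ 2
        ≤ m * (8 * q ^ 2 * X β q t ^ 2) + m * (2 * β ^ 2 * C ^ 2 * t ^ 2) := by
        rw [← mul_add]; gcongr
    _ ≤ t / (16 * q) * (8 * q ^ 2 * X β q t ^ 2)
        + X β q t / (4 * C) * (2 * β ^ 2 * C ^ 2 * t ^ 2) := by gcongr
    _ = t * (X β q t * (q * X β q t + β ^ 2 * C * t)) / 2 := by field_simp; ring
    _ ≤ t * E β q C t := by nlinarith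

theorem abs_mul_A'_le {a b : ℝ} (ht : 0 < t) (hE : 0 < E β q C t) (hD : 0 < D β q C t)
    (hE' : |t * E' β q C t| ≤ a * E β q C t) (hD' : |t * D' β q C t| ≤ b * D β q C t) :
    |t * A' β q C t| ≤ (1 + a + 2 * b) * (t * (E β q C t / D β q C t ^ 2)) := by
  have hA : t * A' β q C t = t * (E β q C t / D β q C t ^ 2) *
      (1 + t * E' β q C t / E β q C t - 2 * (t * D' β q C t / D β q C t)) := by
    rw [A']; field_simp
  have ha : |t * E' β q C t / E β q C t| ≤ a := by
    rwa [abs_div, abs_of_pos hE, div_le_iff₀ hE]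
  have hb : |t * D' β q C t / D β q C t| ≤ b := by
    rwa [abs_div, abs_of_pos hD, div_le_iff₀ hD]
  rw [hA, abs_mul, abs_of_pos (by positivity), mul_comm]
  gcongr
  calc _ ≤ |1 + t * E' β q C t / E β q C t| + |2 * (t * D' β q C t / D β q C t)| := abs_sub _ _
    _ ≤ 1 + a + 2 * b := by
      rw [abs_mul, abs_two]
      linarith [abs_add_le 1 (t * E' β q C t / E β q C t)]

theorem eventually_abs_mul_A'_le (hβ : 0 < β) (hq : 0 < q) (hC : 0 ≤ C) :
    ∀ᶠ t in atTop,
      |t * A' β q C t| ≤ (6 * β + 7) * (t * (E β q C t / D β q C t ^ 2)) := by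
  filter_upwards [eventually_le_two_mul_E hβ hq hC, eventually_abs_mul_E'_le hβ hq hC,
    eventually_gt_atTop 0] with t hE hE' ht
  have hS : 0 < X β q t * (q * X β q t + β ^ 2 * C * t) := by
    have := X_pos (β := β) (by linarith : 0 < q + t)
    positivity
  convert abs_mul_A'_le ht (by linarith) (D_pos hβ.le hq hC ht.le) (a := 4 * β + 4)
    (by nlinarith) (abs_mul_D'_le hβ.le hq hC ht.le) using 2
  ring

end OptimalPrice

open OptimalPrice

theorem statement_14_general
    (α₂ β₁ q₀ C : ℝ) (hα₂ : 0 < α₂) (hβ₁ : 0 < β₁) (hq₀ : 0 < q₀) (hC : 0 < C)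
    (r : ℝ → ℝ)
    (κ η P₀ : ℝ → ℝ)
    (hκ : ∀ v, 0 < v → κ v = v * Real.exp (-(α₂ * r v)))
    (hη : ∀ v, 0 < v → η v = (q₀ + κ v) ^ β₁ / ((q₀ + κ v) ^ β₁ + C))
    (hP₀ : ∀ v, 0 < v → P₀ v = q₀ / (q₀ + κ v))
    (hfoc : ∀ v, 0 < v →
      α₂ * β₁ * r v * (1 - η v) * (1 - P₀ v) + α₂ * r v * P₀ v = 1)
    (hdiff : DifferentiableOn ℝ r (Set.Ioi 0))
    (hdiff2 : DifferentiableOn ℝ (deriv r) (Set.Ioi 0)) :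
    Tendsto (fun v => v ^ 2 * deriv (deriv r) v) atTop (nhds (-(1 / α₂))) := by
  have hrφ : ∀ v, 0 < v → α₂ * r v = phi β₁ q₀ C (κ v) := fun v hv => by
    have hκv : 0 < κ v := by rw [hκ v hv]; positivity
    refine mul_eq_phi_of_foc hβ₁.le hq₀ hC.le hκv.le ?_
    simpa only [hη v hv, hP₀ v hv] using hfoc v hv
  have hD : ∀ t, 0 < t → D β₁ q₀ C t ≠ 0 := fun t ht => (D_pos hβ₁.le hq₀ hC.le ht.le).ne'
  have hκ_top := tendsto_atTop_of_eq_mul_exp hκ hrφ (inv_nonneg.2 hq₀.le)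
    fun t ht => phi_le_one_add hβ₁.le hq₀ hC.le ht.le
  have hlim := ((tendsto_mul_div_one_add_pow_three_sub_div_one_add
    (tendsto_mul_E_div_atTop hβ₁ hq₀ hC) (eventually_abs_mul_A'_le hβ₁ hq₀ hC.le)).comp
    hκ_top).div_const α₂
  rw [neg_div] at hlim
  refine hlim.congr' ?_
  filter_upwards [eventually_gt_atTop 0] with v hv
  exact (sq_mul_deriv_deriv_eq hα₂.ne' hκ hrφ
    (fun t ht => hasDerivAt_phi (by linarith) (hD t ht))
    (fun t ht => hasDerivAt_mul_E_div (by linarith) (hD t ht)) hdiff hdiff2 hv).symm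

theorem statement_14
    (α₂ β₁ q₀ C : ℝ) (hα₂ : 0 < α₂) (hβ₁ : 0 < β₁) (hq₀ : 0 < q₀) (hC : 0 < C)
    (r : ℝ → ℝ) (hr : ∀ v, 0 < v → 0 < r v)
    (κ η P₀ : ℝ → ℝ)
    (hκ : ∀ v, 0 < v → κ v = v * Real.exp (-(α₂ * r v)))
    (hη : ∀ v, 0 < v → η v = (q₀ + κ v) ^ β₁ / ((q₀ + κ v) ^ β₁ + C))
    (hP₀ : ∀ v, 0 < v → P₀ v = q₀ / (q₀ + κ v))
    (hfoc : ∀ v, 0 < v →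
      α₂ * β₁ * r v * (1 - η v) * (1 - P₀ v) + α₂ * r v * P₀ v = 1)
    (hdiff : DifferentiableOn ℝ r (Set.Ioi 0))
    (hdiff2 : DifferentiableOn ℝ (deriv r) (Set.Ioi 0)) :
    Tendsto (fun v => v ^ 2 * deriv (deriv r) v) atTop (nhds (-(1 / α₂))) :=
  statement_14_general α₂ β₁ q₀ C hα₂ hβ₁ hq₀ hC r κ η P₀ hκ hη hP₀ hfoc hdiff hdiff2
end
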